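/- arXiv:2504.16403 — 12 statements merged into one kernel-verified Lean document; each statement's English description precedes it below -/
import Mathlib

section
/- For arbitrary vectors a, b, c, d, A, B ∈ ℝ², the curves r₁(t) = ½(a cos ωt + A cos 2ωt) + (1/(4mω))(2b sin ωt + B sin 2ωt), r₃(t) = ½(−a cos ωt + A cos 2ωt) + (1/(4mω))(−2b sin ωt + B sin 2ωt), r₂(t) = ½(c cos ωt − A cos 2ωt) + (1/(4mω))(2d sin ωt − B sin 2ωt), and r₄(t) = ½(−c cos ωt − A cos 2ωt) + (1/(4mω))(−2d sin ωt − B sin 2ωt) form a solution of the four-body system, and moreover r₁(t) + r₂(t) + r₃(t) + r₄(t) = 0 for all t ∈ ℝ. -/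
noncomputable section

/-- The Euclidean plane. -/
abbrev Plane : Type := EuclideanSpace ℝ (Fin 2)

/-- A solution of the planar four-body system with pairwise quadratic potential
`V = (mω²/4)(2‖r₁−r₂‖² + 2‖r₂−r₃‖² + 2‖r₃−r₄‖² + 2‖r₁−r₄‖² − ‖r₁−r₃‖² − ‖r₂−r₄‖²)`:
four twice differentiable curves satisfying Newton's equations
`rᵢ'' = −ω²((rᵢ − r_{i+1}) + (rᵢ − r_{i−1}) − ½(rᵢ − r_{i+2}))` (indices mod 4). -/
def IsFourBodySolution (ω : ℝ) (r₁ r₂ r₃ r₄ : ℝ → Plane) : Prop :=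
  (Differentiable ℝ r₁ ∧ Differentiable ℝ (deriv r₁)) ∧
  (Differentiable ℝ r₂ ∧ Differentiable ℝ (deriv r₂)) ∧
  (Differentiable ℝ r₃ ∧ Differentiable ℝ (deriv r₃)) ∧
  (Differentiable ℝ r₄ ∧ Differentiable ℝ (deriv r₄)) ∧
  (∀ t : ℝ, deriv (deriv r₁) t =
    (-(ω ^ 2)) • ((r₁ t - r₂ t) + (r₁ t - r₄ t) - (1 / 2 : ℝ) • (r₁ t - r₃ t))) ∧
  (∀ t : ℝ, deriv (deriv r₂) t =
    (-(ω ^ 2)) • ((r₂ t - r₃ t) + (r₂ t - r₁ t) - (1 / 2 : ℝ) • (r₂ t - r₄ t))) ∧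
  (∀ t : ℝ, deriv (deriv r₃) t =
    (-(ω ^ 2)) • ((r₃ t - r₄ t) + (r₃ t - r₂ t) - (1 / 2 : ℝ) • (r₃ t - r₁ t))) ∧
  (∀ t : ℝ, deriv (deriv r₄) t =
    (-(ω ^ 2)) • ((r₄ t - r₁ t) + (r₄ t - r₃ t) - (1 / 2 : ℝ) • (r₄ t - r₂ t)))

/-- Explicit trigonometric family of curves (general solution form). -/
def bodyCurve (m ω : ℝ) (x y X Y : Plane) : ℝ → Plane := fun t =>
  (Real.cos (ω * t) / 2) • x + (Real.cos (2 * ω * t) / 2) • X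
    + (Real.sin (ω * t) / (2 * m * ω)) • y + (Real.sin (2 * ω * t) / (4 * m * ω)) • Y

/-!
The force in Newton's equations is linear in the configuration. On configurations
`(u, v, -u, -v)` it acts as `-ω²`, and on alternating configurations `(w, -w, w, -w)` as
`-4ω²`. The given curves superpose an oscillation of frequency `ω` in a mode of the first
kind and one of frequency `2ω` in a mode of the second kind, so they solve the equations.
-/

section HarmonicCurve

variable {E : Type*} [NormedAddCommGroup E] [NormedSpace ℝ E]

def harmonicCurve (k : ℝ) (u v : E) (t : ℝ) : E :=
  Real.cos (k * t) • u + Real.sin (k * t) • v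

theorem hasDerivAt_harmonicCurve (k : ℝ) (u v : E) (t : ℝ) :
    HasDerivAt (harmonicCurve k u v) (harmonicCurve k (k • v) (-(k • u)) t) t := by
  have hcos := ((hasDerivAt_id t).const_mul k).cos.smul_const u
  have hsin := ((hasDerivAt_id t).const_mul k).sin.smul_const v
  refine (hcos.add hsin).congr_deriv ?_
  simp only [harmonicCurve, id_eq]
  module

theorem differentiable_harmonicCurve (k : ℝ) (u v : E) :
    Differentiable ℝ (harmonicCurve k u v) :=
  fun t => (hasDerivAt_harmonicCurve k u v t).differentiableAt

theorem deriv_harmonicCurve (k : ℝ) (u v : E) :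
    deriv (harmonicCurve k u v) = harmonicCurve k (k • v) (-(k • u)) :=
  funext fun t => (hasDerivAt_harmonicCurve k u v t).deriv

theorem hasDerivAt_deriv_harmonicCurve (k : ℝ) (u v : E) (t : ℝ) :
    HasDerivAt (deriv (harmonicCurve k u v)) (-(k ^ 2) • harmonicCurve k u v t) t := by
  rw [deriv_harmonicCurve]
  convert hasDerivAt_harmonicCurve k (k • v) (-(k • u)) t using 1
  simp only [harmonicCurve]
  module

end HarmonicCurve

theorem hasDerivAt_deriv_add {E : Type*} [NormedAddCommGroup E] [NormedSpace ℝ E]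
    {f g : ℝ → E} {f'' g'' : E} {t : ℝ} (hf : Differentiable ℝ f) (hg : Differentiable ℝ g)
    (hf'' : HasDerivAt (deriv f) f'' t) (hg'' : HasDerivAt (deriv g) g'' t) :
    HasDerivAt (deriv (f + g)) (f'' + g'') t := by
  have hderiv : deriv (f + g) = deriv f + deriv g := funext fun s => deriv_add (hf s) (hg s)
  rw [hderiv]
  exact hf''.add hg''

section BodyCurve

variable (m ω : ℝ) (x y X Y : Plane)

theorem bodyCurve_eq_add :
    bodyCurve m ω x y X Y =
      harmonicCurve ω ((1 / 2 : ℝ) • x) ((2 * m * ω)⁻¹ • y)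
        + harmonicCurve (2 * ω) ((1 / 2 : ℝ) • X) ((4 * m * ω)⁻¹ • Y) := by
  funext t
  simp only [bodyCurve, harmonicCurve, Pi.add_apply]
  module

theorem hasDerivAt_deriv_bodyCurve (t : ℝ) :
    HasDerivAt (deriv (bodyCurve m ω x y X Y))
      (-(ω ^ 2) • harmonicCurve ω ((1 / 2 : ℝ) • x) ((2 * m * ω)⁻¹ • y) t
        + -((2 * ω) ^ 2) • harmonicCurve (2 * ω) ((1 / 2 : ℝ) • X) ((4 * m * ω)⁻¹ • Y) t) t := by
  rw [bodyCurve_eq_add]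
  exact hasDerivAt_deriv_add (differentiable_harmonicCurve _ _ _)
    (differentiable_harmonicCurve _ _ _) (hasDerivAt_deriv_harmonicCurve _ _ _ t)
    (hasDerivAt_deriv_harmonicCurve _ _ _ t)

theorem differentiable_bodyCurve :
    Differentiable ℝ (bodyCurve m ω x y X Y) ∧
      Differentiable ℝ (deriv (bodyCurve m ω x y X Y)) := by
  refine ⟨?_, fun t => (hasDerivAt_deriv_bodyCurve m ω x y X Y t).differentiableAt⟩
  rw [bodyCurve_eq_add]
  exact (differentiable_harmonicCurve _ _ _).add (differentiable_harmonicCurve _ _ _)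

theorem deriv_deriv_bodyCurve (p q : Plane) (t : ℝ) :
    deriv (deriv (bodyCurve m ω x y X Y)) t =
      (-(ω ^ 2)) • ((bodyCurve m ω x y X Y t - bodyCurve m ω p q (-X) (-Y) t)
        + (bodyCurve m ω x y X Y t - bodyCurve m ω (-p) (-q) (-X) (-Y) t)
        - (1 / 2 : ℝ) • (bodyCurve m ω x y X Y t - bodyCurve m ω (-x) (-y) X Y t)) := by
  rw [(hasDerivAt_deriv_bodyCurve m ω x y X Y t).deriv]
  simp only [bodyCurve, harmonicCurve]
  module

end BodyCurve

theorem explicit_curves_solve_four_body_general (m ω : ℝ)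
    (a b c d A B : Plane) :
    IsFourBodySolution ω
      (bodyCurve m ω a b A B)
      (bodyCurve m ω c d (-A) (-B))
      (bodyCurve m ω (-a) (-b) A B)
      (bodyCurve m ω (-c) (-d) (-A) (-B))
    ∧ ∀ t : ℝ,
      bodyCurve m ω a b A B t + bodyCurve m ω c d (-A) (-B) t
        + bodyCurve m ω (-a) (-b) A B t + bodyCurve m ω (-c) (-d) (-A) (-B) t = 0 := by
  refine ⟨⟨differentiable_bodyCurve m ω a b A B, differentiable_bodyCurve m ω c d (-A) (-B),
    differentiable_bodyCurve m ω (-a) (-b) A B, differentiable_bodyCurve m ω (-c) (-d) (-A) (-B),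
    fun t => ?_, fun t => ?_, fun t => ?_, fun t => ?_⟩, fun t => ?_⟩
  · simpa using deriv_deriv_bodyCurve m ω a b A B c d t
  · simpa using deriv_deriv_bodyCurve m ω c d (-A) (-B) (-a) (-b) t
  · simpa using deriv_deriv_bodyCurve m ω (-a) (-b) A B (-c) (-d) t
  · simpa using deriv_deriv_bodyCurve m ω (-c) (-d) (-A) (-B) a b t
  · simp only [bodyCurve]
    module

/-- For arbitrary vectors `a b c d A B ∈ ℝ²`, the explicit trigonometric
curves `r₁, r₂, r₃, r₄` form a solution of the four-body system, and their sum vanishes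
identically. -/
theorem explicit_curves_solve_four_body (m ω : ℝ) (hm : 0 < m) (hω : 0 < ω)
    (a b c d A B : Plane) :
    IsFourBodySolution ω
      (bodyCurve m ω a b A B)
      (bodyCurve m ω c d (-A) (-B))
      (bodyCurve m ω (-a) (-b) A B)
      (bodyCurve m ω (-c) (-d) (-A) (-B))
    ∧ ∀ t : ℝ,
      bodyCurve m ω a b A B t + bodyCurve m ω c d (-A) (-B) t
        + bodyCurve m ω (-a) (-b) A B t + bodyCurve m ω (-c) (-d) (-A) (-B) t = 0 :=
  explicit_curves_solve_four_body_general m ω a b c d A B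
end
end

section
/- Every solution of the four-body system in the center-of-mass frame satisfies, for all t ∈ ℝ, r₁(t) = ½(r₁₃(0) cos ωt + r₁₃⁺(0) cos 2ωt) + (1/(4mω))(2p₁₃(0) sin ωt + p₁₃⁺(0) sin 2ωt) and r₂(t) = ½(r₂₄(0) cos ωt + r₂₄⁺(0) cos 2ωt) + (1/(4mω))(2p₂₄(0) sin ωt + p₂₄⁺(0) sin 2ωt). -/
/-!
The centre of mass has zero acceleration, so it stays at the origin. The relative coordinate
`r₁ - r₃` then obeys `x'' = -ω² x`, and, since `r₂ + r₄ = -(r₁ + r₃)`, the coordinate `r₁ + r₃`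
obeys `x'' = -(2ω)² x`. Each harmonic equation `f'' = -k² f` is solved through its two first
integrals `cos (k t) f - (sin (k t) / k) f'` and `sin (k t) f + (cos (k t) / k) f'`.
Finally `r₁ = ((r₁ - r₃) + (r₁ + r₃)) / 2`, and body 2 is body 1 after relabelling the bodies
cyclically.
-/

noncomputable section

open Real

section Harmonic

variable {F : Type*} [NormedAddCommGroup F] [NormedSpace ℝ F]

theorem is_const_of_hasDerivAt_zero {f : ℝ → F} (hf : ∀ t, HasDerivAt f 0 t) (t : ℝ) :
    f t = f 0 :=
  is_const_of_deriv_eq_zero (fun s => (hf s).differentiableAt) (fun s => (hf s).deriv) t 0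

theorem harmonic_eq_cos_smul_add_sin_smul {k : ℝ} (hk : k ≠ 0) {f f' : ℝ → F}
    (hf : ∀ t, HasDerivAt f (f' t) t) (hf' : ∀ t, HasDerivAt f' (-k ^ 2 • f t) t) (t : ℝ) :
    f t = cos (k * t) • f 0 + (sin (k * t) / k) • f' 0 := by
  have hkt (s : ℝ) : HasDerivAt (k * ·) k s := by simpa using (hasDerivAt_id s).const_mul k
  have hg (s : ℝ) : HasDerivAt (fun s => cos (k * s) • f s - (sin (k * s) / k) • f' s) 0 s := by
    refine (((hkt s).cos.smul (hf s)).sub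
      (((hkt s).sin.div_const k).smul (hf' s))).congr_deriv ?_
    match_scalars <;> field_simp <;> ring
  have hh (s : ℝ) : HasDerivAt (fun s => sin (k * s) • f s + (cos (k * s) / k) • f' s) 0 s := by
    refine (((hkt s).sin.smul (hf s)).add
      (((hkt s).cos.div_const k).smul (hf' s))).congr_deriv ?_
    match_scalars <;> field_simp <;> ring
  have hg0 := is_const_of_hasDerivAt_zero hg t
  have hh0 := is_const_of_hasDerivAt_zero hh t
  simp only [mul_zero, cos_zero, sin_zero, one_smul, zero_div, zero_smul, sub_zero,
    zero_add] at hg0 hh0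
  calc f t = cos (k * t) • (cos (k * t) • f t - (sin (k * t) / k) • f' t)
        + sin (k * t) • (sin (k * t) • f t + (cos (k * t) / k) • f' t) := by
          match_scalars
          · nlinarith [sin_sq_add_cos_sq (k * t)]
          · ring
    _ = cos (k * t) • f 0 + (sin (k * t) / k) • f' 0 := by
          rw [hg0, hh0]
          match_scalars <;> field_simp

end Harmonic

namespace IsFourBodySolution

variable {ω : ℝ} {r₁ r₂ r₃ r₄ : ℝ → Plane}

theorem rotate (h : IsFourBodySolution ω r₁ r₂ r₃ r₄) : IsFourBodySolution ω r₂ r₃ r₄ r₁ :=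
  let ⟨h₁, h₂, h₃, h₄, e₁, e₂, e₃, e₄⟩ := h
  ⟨h₂, h₃, h₄, h₁, e₂, e₃, e₄, e₁⟩

theorem add_add_add_eq_zero (h : IsFourBodySolution ω r₁ r₂ r₃ r₄)
    (hr : r₁ 0 + r₂ 0 + r₃ 0 + r₄ 0 = 0)
    (hv : deriv r₁ 0 + deriv r₂ 0 + deriv r₃ 0 + deriv r₄ 0 = 0) (t : ℝ) :
    r₁ t + r₂ t + r₃ t + r₄ t = 0 := by
  obtain ⟨⟨d₁, d₁'⟩, ⟨d₂, d₂'⟩, ⟨d₃, d₃'⟩, ⟨d₄, d₄'⟩, e₁, e₂, e₃, e₄⟩ := h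
  have hv' (s : ℝ) :
      HasDerivAt (fun s => deriv r₁ s + deriv r₂ s + deriv r₃ s + deriv r₄ s) 0 s := by
    refine ((((d₁' s).hasDerivAt.add (d₂' s).hasDerivAt).add (d₃' s).hasDerivAt).add
      (d₄' s).hasDerivAt).congr_deriv ?_
    rw [e₁, e₂, e₃, e₄]
    module
  have hr' (s : ℝ) : HasDerivAt (fun s => r₁ s + r₂ s + r₃ s + r₄ s) 0 s := by
    refine ((((d₁ s).hasDerivAt.add (d₂ s).hasDerivAt).add (d₃ s).hasDerivAt).add
      (d₄ s).hasDerivAt).congr_deriv ?_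
    rw [is_const_of_hasDerivAt_zero hv' s, hv]
  rw [is_const_of_hasDerivAt_zero hr' t, hr]

theorem sub_eq (hω : ω ≠ 0) (h : IsFourBodySolution ω r₁ r₂ r₃ r₄) (t : ℝ) :
    r₁ t - r₃ t = cos (ω * t) • (r₁ 0 - r₃ 0) + (sin (ω * t) / ω) • (deriv r₁ 0 - deriv r₃ 0) := by
  obtain ⟨⟨d₁, d₁'⟩, -, ⟨d₃, d₃'⟩, -, e₁, -, e₃, -⟩ := h
  refine harmonic_eq_cos_smul_add_sin_smul hω (f := fun t => r₁ t - r₃ t)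
    (fun s => (d₁ s).hasDerivAt.sub (d₃ s).hasDerivAt) (fun s => ?_) t
  refine ((d₁' s).hasDerivAt.sub (d₃' s).hasDerivAt).congr_deriv ?_
  rw [e₁, e₃]
  module

theorem add_eq (hω : ω ≠ 0) (h : IsFourBodySolution ω r₁ r₂ r₃ r₄)
    (hS : ∀ t, r₁ t + r₂ t + r₃ t + r₄ t = 0) (t : ℝ) :
    r₁ t + r₃ t = cos (2 * ω * t) • (r₁ 0 + r₃ 0)
      + (sin (2 * ω * t) / (2 * ω)) • (deriv r₁ 0 + deriv r₃ 0) := by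
  obtain ⟨⟨d₁, d₁'⟩, -, ⟨d₃, d₃'⟩, -, e₁, -, e₃, -⟩ := h
  refine harmonic_eq_cos_smul_add_sin_smul (mul_ne_zero two_ne_zero hω)
    (f := fun t => r₁ t + r₃ t)
    (fun s => (d₁ s).hasDerivAt.add (d₃ s).hasDerivAt) (fun s => ?_) t
  refine ((d₁' s).hasDerivAt.add (d₃' s).hasDerivAt).congr_deriv ?_
  rw [e₁, e₃]
  linear_combination (norm := module) (2 * ω ^ 2) • hS s

theorem first_body_eq (hω : ω ≠ 0) (h : IsFourBodySolution ω r₁ r₂ r₃ r₄)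
    (hr : r₁ 0 + r₂ 0 + r₃ 0 + r₄ 0 = 0)
    (hv : deriv r₁ 0 + deriv r₂ 0 + deriv r₃ 0 + deriv r₄ 0 = 0) (t : ℝ) :
    r₁ t = (cos (ω * t) / 2) • (r₁ 0 - r₃ 0) + (cos (2 * ω * t) / 2) • (r₁ 0 + r₃ 0)
      + (sin (ω * t) / (2 * ω)) • (deriv r₁ 0 - deriv r₃ 0)
      + (sin (2 * ω * t) / (4 * ω)) • (deriv r₁ 0 + deriv r₃ 0) :=
  calc r₁ t = (1 / 2 : ℝ) • ((r₁ t - r₃ t) + (r₁ t + r₃ t)) := by module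
    _ = _ := by
      rw [h.sub_eq hω, h.add_eq hω (h.add_add_add_eq_zero hr hv)]
      match_scalars <;> field_simp <;> ring

end IsFourBodySolution

/-- Every center-of-mass-frame solution of the four-body system has the
explicit trigonometric form given in the paper, for bodies 1 and 2. -/
theorem general_solution_form (m ω : ℝ) (hm : 0 < m) (hω : 0 < ω)
    (r₁ r₂ r₃ r₄ : ℝ → Plane)
    (hsol : IsFourBodySolution ω r₁ r₂ r₃ r₄)
    (hcomr : r₁ 0 + r₂ 0 + r₃ 0 + r₄ 0 = 0)
    (hcomp : m • deriv r₁ 0 + m • deriv r₂ 0 + m • deriv r₃ 0 + m • deriv r₄ 0 = 0) :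
    ∀ t : ℝ,
      r₁ t = (Real.cos (ω * t) / 2) • (r₁ 0 - r₃ 0)
              + (Real.cos (2 * ω * t) / 2) • (r₁ 0 + r₃ 0)
              + (Real.sin (ω * t) / (2 * m * ω)) • (m • deriv r₁ 0 - m • deriv r₃ 0)
              + (Real.sin (2 * ω * t) / (4 * m * ω)) • (m • deriv r₁ 0 + m • deriv r₃ 0)
      ∧
      r₂ t = (Real.cos (ω * t) / 2) • (r₂ 0 - r₄ 0)
              + (Real.cos (2 * ω * t) / 2) • (r₂ 0 + r₄ 0)
              + (Real.sin (ω * t) / (2 * m * ω)) • (m • deriv r₂ 0 - m • deriv r₄ 0)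
              + (Real.sin (2 * ω * t) / (4 * m * ω)) • (m • deriv r₂ 0 + m • deriv r₄ 0) := by
  have hv : deriv r₁ 0 + deriv r₂ 0 + deriv r₃ 0 + deriv r₄ 0 = 0 := by
    simpa only [← smul_add, smul_eq_zero, hm.ne', false_or] using hcomp
  intro t
  constructor
  · rw [hsol.first_body_eq hω.ne' hcomr hv t]
    match_scalars <;> field_simp
  · rw [hsol.rotate.first_body_eq hω.ne' (by rw [← hcomr]; abel) (by rw [← hv]; abel) t]
    match_scalars <;> field_simp
end
end

section
/- For every solution of the four-body system, the relative vectors evolve as pure ω-harmonics: r₁₃(t) = r₁₃(0) cos ωt + (1/(mω)) p₁₃(0) sin ωt and r₂₄(t) = r₂₄(0) cos ωt + (1/(mω)) p₂₄(0) sin ωt for all t ∈ ℝ. -/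
noncomputable section

/-!
Since `r₂` and `r₄` drop out of `r₁'' − r₃''`, the relative vector `x = r₁₃` obeys
`x'' = −ω² x`. For this oscillator the quantities `ω cos(ωt) x − sin(ωt) x'` and
`ω sin(ωt) x + cos(ωt) x'` have zero derivative, and the combination
`cos(ωt)·(first) + sin(ωt)·(second) = ω x(t)` expresses `x(t)` through `x(0)` and `x'(0)`.
The pair `r₂₄` is handled by the cyclic symmetry `(r₁, r₂, r₃, r₄) ↦ (r₂, r₃, r₄, r₁)`.
-/

open Real

theorem eq_apply_zero_of_hasDerivAt_zero {E : Type*} [NormedAddCommGroup E] [NormedSpace ℝ E]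
    {f : ℝ → E} (hf : ∀ t, HasDerivAt f 0 t) (t : ℝ) : f t = f 0 :=
  is_const_of_deriv_eq_zero (fun t => (hf t).differentiableAt) (fun t => (hf t).deriv) t 0

section HarmonicOscillator

variable {E : Type*} [NormedAddCommGroup E] [NormedSpace ℝ E] {ω : ℝ} {x x' : ℝ → E}

theorem hasDerivAt_cos_mul (ω t : ℝ) :
    HasDerivAt (fun s => cos (ω * s)) (-(ω * sin (ω * t))) t := by
  simpa [mul_comm] using ((hasDerivAt_id t).const_mul ω).cos

theorem hasDerivAt_sin_mul (ω t : ℝ) :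
    HasDerivAt (fun s => sin (ω * s)) (ω * cos (ω * t)) t := by
  simpa [mul_comm] using ((hasDerivAt_id t).const_mul ω).sin

theorem mul_cos_smul_sub_sin_smul_eq_of_hasDerivAt (hx : ∀ t, HasDerivAt x (x' t) t)
    (hx' : ∀ t, HasDerivAt x' (-(ω ^ 2) • x t) t) (t : ℝ) :
    (ω * cos (ω * t)) • x t - sin (ω * t) • x' t = ω • x 0 := by
  have hderiv : ∀ s, HasDerivAt (fun s => (ω * cos (ω * s)) • x s - sin (ω * s) • x' s) 0 s :=
    fun s => ((((hasDerivAt_cos_mul ω s).const_mul ω).smul (hx s)).sub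
      ((hasDerivAt_sin_mul ω s).smul (hx' s))).congr_deriv (by module)
  simpa using eq_apply_zero_of_hasDerivAt_zero hderiv t

theorem mul_sin_smul_add_cos_smul_eq_of_hasDerivAt (hx : ∀ t, HasDerivAt x (x' t) t)
    (hx' : ∀ t, HasDerivAt x' (-(ω ^ 2) • x t) t) (t : ℝ) :
    (ω * sin (ω * t)) • x t + cos (ω * t) • x' t = x' 0 := by
  have hderiv : ∀ s, HasDerivAt (fun s => (ω * sin (ω * s)) • x s + cos (ω * s) • x' s) 0 s :=
    fun s => ((((hasDerivAt_sin_mul ω s).const_mul ω).smul (hx s)).add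
      ((hasDerivAt_cos_mul ω s).smul (hx' s))).congr_deriv (by module)
  simpa using eq_apply_zero_of_hasDerivAt_zero hderiv t

theorem eq_cos_smul_add_sin_div_smul_of_hasDerivAt (hω : ω ≠ 0)
    (hx : ∀ t, HasDerivAt x (x' t) t) (hx' : ∀ t, HasDerivAt x' (-(ω ^ 2) • x t) t) (t : ℝ) :
    x t = cos (ω * t) • x 0 + (sin (ω * t) / ω) • x' 0 := by
  have hωx : ω • x t = cos (ω * t) • (ω • x 0) + sin (ω * t) • x' 0 := by
    rw [← mul_cos_smul_sub_sin_smul_eq_of_hasDerivAt hx hx' t,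
      ← mul_sin_smul_add_cos_smul_eq_of_hasDerivAt hx hx' t]
    linear_combination (norm := module) (cos_sq_add_sin_sq (ω * t)) • (-(ω • x t))
  calc x t = ω⁻¹ • (ω • x t) := (inv_smul_smul₀ hω _).symm
    _ = cos (ω * t) • x 0 + (sin (ω * t) / ω) • x' 0 := by
      rw [hωx]
      match_scalars <;> field_simp

end HarmonicOscillator

namespace IsFourBodySolution

variable {ω : ℝ} {r₁ r₂ r₃ r₄ : ℝ → Plane}

theorem sub_eq_cos_smul_add_sin_div_smul (h : IsFourBodySolution ω r₁ r₂ r₃ r₄) (hω : ω ≠ 0)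
    (t : ℝ) :
    r₁ t - r₃ t = cos (ω * t) • (r₁ 0 - r₃ 0) + (sin (ω * t) / ω) • (deriv r₁ 0 - deriv r₃ 0) := by
  obtain ⟨⟨d₁, d₁'⟩, -, ⟨d₃, d₃'⟩, -, e₁, -, e₃, -⟩ := h
  refine eq_cos_smul_add_sin_div_smul_of_hasDerivAt (x := fun s => r₁ s - r₃ s) hω
    (fun s => (d₁ s).hasDerivAt.sub (d₃ s).hasDerivAt)
    (fun s => ((d₁' s).hasDerivAt.sub (d₃' s).hasDerivAt).congr_deriv ?_) t
  rw [e₁, e₃]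
  module

end IsFourBodySolution

/-- For every solution of the four-body system, the relative vectors
`r₁₃` and `r₂₄` evolve as pure `ω`-harmonics. -/
theorem relative_vectors_harmonic (m ω : ℝ) (hm : 0 < m) (hω : 0 < ω)
    (r₁ r₂ r₃ r₄ : ℝ → Plane)
    (hsol : IsFourBodySolution ω r₁ r₂ r₃ r₄) :
    ∀ t : ℝ,
      r₁ t - r₃ t = Real.cos (ω * t) • (r₁ 0 - r₃ 0)
          + (Real.sin (ω * t) / (m * ω)) • (m • deriv r₁ 0 - m • deriv r₃ 0)
      ∧
      r₂ t - r₄ t = Real.cos (ω * t) • (r₂ 0 - r₄ 0)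
          + (Real.sin (ω * t) / (m * ω)) • (m • deriv r₂ 0 - m • deriv r₄ 0) := by
  intro t
  have momentum (a b : Plane) :
      (sin (ω * t) / (m * ω)) • (m • a - m • b) = (sin (ω * t) / ω) • (a - b) := by
    rw [← smul_sub, smul_smul]
    field_simp
  rw [momentum, momentum]
  exact ⟨hsol.sub_eq_cos_smul_add_sin_div_smul hω.ne' t,
    hsol.rotate.sub_eq_cos_smul_add_sin_div_smul hω.ne' t⟩
end
end

section
/- Let r₁, r₂, r₃, r₄ be a solution of the four-body system whose initial data satisfy ‖p₁₃(0)‖ = mω‖r₁₃(0)‖ and r₁₃(0) · p₁₃(0) = 0. Then the relative distance ‖r₁₃(t)‖ is constant in time: ‖r₁₃(t)‖ = ‖r₁₃(0)‖ for all t ∈ ℝ (the pair 1,3 executes a rigid two-body choreography). -/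
noncomputable section

/-! The relative coordinate `u = r₁₃` decouples from the other bodies and solves `u'' = -ω² u`.
For such an oscillator with velocity `v`, the pair `(⟪u, v⟫, ‖v‖² - ω²‖u‖²)` is again a harmonic
oscillator, of frequency `2ω`. The initial conditions say that this pair starts at rest at the
origin, so by energy conservation it stays there; in particular `(‖u‖²)' = 2⟪u, v⟫ = 0`. -/

def IsHarmonicOscillator {E : Type*} [NormedAddCommGroup E] [InnerProductSpace ℝ E]
    (ω : ℝ) (u v : ℝ → E) : Prop :=
  ∀ t, HasDerivAt u (v t) t ∧ HasDerivAt v (-(ω ^ 2) • u t) t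

namespace IsHarmonicOscillator

variable {E : Type*} [NormedAddCommGroup E] [InnerProductSpace ℝ E] {ω : ℝ} {u v : ℝ → E}

theorem energy_eq (h : IsHarmonicOscillator ω u v) (t s : ℝ) :
    ‖v t‖ ^ 2 + ω ^ 2 * ‖u t‖ ^ 2 = ‖v s‖ ^ 2 + ω ^ 2 * ‖u s‖ ^ 2 := by
  have hderiv : ∀ t, HasDerivAt (fun t => ‖v t‖ ^ 2 + ω ^ 2 * ‖u t‖ ^ 2) 0 t := fun t => by
    refine ((h t).2.norm_sq.add ((h t).1.norm_sq.const_mul (ω ^ 2))).congr_deriv ?_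
    rw [real_inner_smul_right, real_inner_comm]
    ring
  exact is_const_of_deriv_eq_zero (fun t => (hderiv t).differentiableAt)
    (fun t => (hderiv t).deriv) t s

theorem eq_zero (h : IsHarmonicOscillator ω u v) (hω : ω ≠ 0) (hu₀ : u 0 = 0) (hv₀ : v 0 = 0)
    (t : ℝ) : u t = 0 := by
  have henergy := h.energy_eq t 0
  rw [hu₀, hv₀, norm_zero] at henergy
  have : ω ^ 2 * ‖u t‖ ^ 2 = 0 := by nlinarith [sq_nonneg ‖v t‖, sq_nonneg ‖u t‖]
  simpa [hω] using this

theorem inner_normSq (h : IsHarmonicOscillator ω u v) :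
    IsHarmonicOscillator (2 * ω) (fun t => inner ℝ (u t) (v t))
      (fun t => ‖v t‖ ^ 2 - ω ^ 2 * ‖u t‖ ^ 2) := fun t => by
  constructor
  · refine ((h t).1.inner ℝ (h t).2).congr_deriv ?_
    rw [real_inner_smul_right, real_inner_self_eq_norm_sq, real_inner_self_eq_norm_sq]
    ring
  · refine ((h t).2.norm_sq.sub ((h t).1.norm_sq.const_mul (ω ^ 2))).congr_deriv ?_
    rw [real_inner_smul_right, real_inner_comm (u t)]
    ring

theorem norm_eq_of_inner_eq_zero (h : IsHarmonicOscillator ω u v) (hω : ω ≠ 0)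
    (hinner : inner ℝ (u 0) (v 0) = 0) (hnorm : ‖v 0‖ = ω * ‖u 0‖) (t : ℝ) : ‖u t‖ = ‖u 0‖ := by
  have hinner_zero : ∀ t, inner ℝ (u t) (v t) = 0 :=
    h.inner_normSq.eq_zero (mul_ne_zero two_ne_zero hω) hinner (by simp [hnorm, mul_pow])
  have hderiv : ∀ t, HasDerivAt (fun t => ‖u t‖ ^ 2) 0 t := fun t => by
    simpa [hinner_zero] using (h t).1.norm_sq
  have hsq : ‖u t‖ ^ 2 = ‖u 0‖ ^ 2 := is_const_of_deriv_eq_zero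
    (fun t => (hderiv t).differentiableAt) (fun t => (hderiv t).deriv) t 0
  exact (sq_eq_sq₀ (norm_nonneg _) (norm_nonneg _)).mp hsq

end IsHarmonicOscillator

theorem IsFourBodySolution.isHarmonicOscillator_sub₁₃ {ω : ℝ} {r₁ r₂ r₃ r₄ : ℝ → Plane}
    (hsol : IsFourBodySolution ω r₁ r₂ r₃ r₄) :
    IsHarmonicOscillator ω (fun t => r₁ t - r₃ t) (fun t => deriv r₁ t - deriv r₃ t) := by
  obtain ⟨⟨hr₁, hr₁'⟩, -, ⟨hr₃, hr₃'⟩, -, hnewton₁, -, hnewton₃, -⟩ := hsol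
  refine fun t => ⟨(hr₁ t).hasDerivAt.sub (hr₃ t).hasDerivAt, ?_⟩
  refine ((hr₁' t).hasDerivAt.sub (hr₃' t).hasDerivAt).congr_deriv ?_
  rw [hnewton₁, hnewton₃]
  module

/-- If the initial data satisfy `‖p₁₃(0)‖ = mω‖r₁₃(0)‖` and
`r₁₃(0) ⊥ p₁₃(0)`, then the relative distance `‖r₁₃(t)‖` is constant in time. -/
theorem rigid_pair_13 (m ω : ℝ) (hm : 0 < m) (hω : 0 < ω)
    (r₁ r₂ r₃ r₄ : ℝ → Plane)
    (hsol : IsFourBodySolution ω r₁ r₂ r₃ r₄)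
    (hmag : ‖m • deriv r₁ 0 - m • deriv r₃ 0‖ = m * ω * ‖r₁ 0 - r₃ 0‖)
    (hperp : (inner ℝ (r₁ 0 - r₃ 0) (m • deriv r₁ 0 - m • deriv r₃ 0) : ℝ) = 0) :
    ∀ t : ℝ, ‖r₁ t - r₃ t‖ = ‖r₁ 0 - r₃ 0‖ := by
  rw [← smul_sub] at hmag hperp
  rw [norm_smul, Real.norm_of_nonneg hm.le, mul_assoc] at hmag
  rw [real_inner_smul_right] at hperp
  exact hsol.isHarmonicOscillator_sub₁₃.norm_eq_of_inner_eq_zero hω.ne'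
    ((mul_eq_zero.mp hperp).resolve_left hm.ne') (mul_left_cancel₀ hm.ne' hmag)
end
end

section
/- (Lemma 1, sufficiency.) Let r₁, r₂, r₃, r₄ be a solution of the four-body system in the center-of-mass frame whose initial data satisfy mω r₂₄(0) = p₁₃(0) and p₂₄(0) = −mω r₁₃(0). Then r₂(t) = r₁(t + τ) for all t ∈ ℝ, where τ = π/(2ω). -/
/-!
The equations of motion decouple into normal modes. The total `r₁ + r₂ + r₃ + r₄` moves
freely, the alternating sum `r₁ - r₂ + r₃ - r₄` oscillates with frequency `2ω`, and the
diagonals `r₁₃`, `r₂₄` oscillate with frequency `ω`. Zero total momentum keeps the total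
constant, and `τ = π/(2ω)` is half a period of the alternating sum, so
`(r₁ + r₃)(t + τ) = (r₂ + r₄)(t)`. The initial conditions say that `r₂₄` is `r₁₃` delayed by a
quarter period, which is again `τ`, so `r₁₃(t + τ) = r₂₄(t)`. Adding the two identities gives
`r₁(t + τ) = r₂(t)`.
-/

noncomputable section

open Real Set

section LinearODE

variable {E : Type*} [NormedAddCommGroup E] [NormedSpace ℝ E]

def SolvesLinearODE (c : ℝ) (f v : ℝ → E) : Prop :=
  ∀ t, HasDerivAt f (v t) t ∧ HasDerivAt v (c • f t) t

theorem solvesLinearODE_cos_smul_add_sin_smul (k : ℝ) (A B : E) :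
    SolvesLinearODE (-(k ^ 2)) (fun t => cos (k * t) • A + sin (k * t) • B)
      (fun t => k • (cos (k * t) • B - sin (k * t) • A)) := by
  intro t
  have hcos : HasDerivAt (fun t => cos (k * t)) (-sin (k * t) * k) t :=
    ((hasDerivAt_id t).const_mul k).cos.congr_deriv (by simp)
  have hsin : HasDerivAt (fun t => sin (k * t)) (cos (k * t) * k) t :=
    ((hasDerivAt_id t).const_mul k).sin.congr_deriv (by simp)
  exact ⟨((hcos.smul_const A).add (hsin.smul_const B)).congr_deriv (by module),
    (((hcos.smul_const B).sub (hsin.smul_const A)).const_smul k).congr_deriv (by module)⟩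

namespace SolvesLinearODE

variable {c k : ℝ} {f v g w : ℝ → E}

theorem eq_of_initial (hf : SolvesLinearODE c f v) (hg : SolvesLinearODE c g w)
    (h₀ : f 0 = g 0) (h₀' : v 0 = w 0) : f = g := by
  let L : (E × E) →L[ℝ] (E × E) :=
    (ContinuousLinearMap.snd ℝ E E).prod (c • ContinuousLinearMap.fst ℝ E E)
  have hphase : (fun t => (f t, v t)) = fun t => (g t, w t) :=
    ODE_solution_unique_univ (v := fun _ => L) (s := fun _ => univ) (t₀ := 0)
      (fun _ => L.lipschitz.lipschitzOnWith)
      (fun t => ⟨(hf t).1.prodMk (hf t).2, trivial⟩)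
      (fun t => ⟨(hg t).1.prodMk (hg t).2, trivial⟩) (by rw [h₀, h₀'])
  funext t
  exact congrArg Prod.fst (congrFun hphase t)

theorem eq_initial (hf : SolvesLinearODE 0 f v) (hv : v 0 = 0) (t : ℝ) : f t = f 0 := by
  have hconst : SolvesLinearODE 0 (fun _ => f 0) (fun _ => (0 : E)) := fun _ =>
    ⟨hasDerivAt_const _ _, by simpa only [zero_smul] using hasDerivAt_const _ _⟩
  exact congrFun (hf.eq_of_initial hconst rfl hv) t

theorem eq_cos_smul_add_sin_smul (hk : k ≠ 0) (hf : SolvesLinearODE (-(k ^ 2)) f v) (t : ℝ) :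
    f t = cos (k * t) • f 0 + sin (k * t) • k⁻¹ • v 0 := by
  refine congrFun (hf.eq_of_initial (solvesLinearODE_cos_smul_add_sin_smul k _ _) ?_ ?_) t
  · simp
  · simp [smul_inv_smul₀ hk]

theorem add_pi_div (hk : k ≠ 0) (hf : SolvesLinearODE (-(k ^ 2)) f v) (t : ℝ) :
    f (t + π / k) = -f t := by
  rw [hf.eq_cos_smul_add_sin_smul hk, hf.eq_cos_smul_add_sin_smul hk t,
    show k * (t + π / k) = k * t + π by field_simp, cos_add_pi, sin_add_pi]
  module

/-- `(k⁻¹ • v 0, -(k • f 0))` is the state of `f` a quarter period later. -/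
theorem eq_add_pi_div_two (hk : k ≠ 0) (hf : SolvesLinearODE (-(k ^ 2)) f v)
    (hg : SolvesLinearODE (-(k ^ 2)) g w) (h₀ : k • g 0 = v 0) (h₀' : w 0 = -(k • f 0))
    (t : ℝ) : g t = f (t + π / (2 * k)) := by
  have hg₀ : g 0 = k⁻¹ • v 0 := by rw [← h₀, inv_smul_smul₀ hk]
  have hw₀ : k⁻¹ • w 0 = -f 0 := by rw [h₀', smul_neg, inv_smul_smul₀ hk]
  rw [hg.eq_cos_smul_add_sin_smul hk, hf.eq_cos_smul_add_sin_smul hk,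
    show k * (t + π / (2 * k)) = k * t + π / 2 by field_simp, cos_add_pi_div_two,
    sin_add_pi_div_two, hg₀, hw₀]
  module

end SolvesLinearODE

end LinearODE

namespace IsFourBodySolution

variable {ω : ℝ} {r₁ r₂ r₃ r₄ : ℝ → Plane}

theorem hasDerivAt (h : IsFourBodySolution ω r₁ r₂ r₃ r₄) (t : ℝ) :
    HasDerivAt r₁ (deriv r₁ t) t ∧ HasDerivAt r₂ (deriv r₂ t) t ∧
      HasDerivAt r₃ (deriv r₃ t) t ∧ HasDerivAt r₄ (deriv r₄ t) t := by
  obtain ⟨⟨h₁, -⟩, ⟨h₂, -⟩, ⟨h₃, -⟩, ⟨h₄, -⟩, -⟩ := h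
  exact ⟨(h₁ t).hasDerivAt, (h₂ t).hasDerivAt, (h₃ t).hasDerivAt, (h₄ t).hasDerivAt⟩

theorem hasDerivAt_deriv (h : IsFourBodySolution ω r₁ r₂ r₃ r₄) (t : ℝ) :
    HasDerivAt (deriv r₁)
        ((-(ω ^ 2)) • ((r₁ t - r₂ t) + (r₁ t - r₄ t) - (1 / 2 : ℝ) • (r₁ t - r₃ t))) t ∧
      HasDerivAt (deriv r₂)
        ((-(ω ^ 2)) • ((r₂ t - r₃ t) + (r₂ t - r₁ t) - (1 / 2 : ℝ) • (r₂ t - r₄ t))) t ∧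
      HasDerivAt (deriv r₃)
        ((-(ω ^ 2)) • ((r₃ t - r₄ t) + (r₃ t - r₂ t) - (1 / 2 : ℝ) • (r₃ t - r₁ t))) t ∧
      HasDerivAt (deriv r₄)
        ((-(ω ^ 2)) • ((r₄ t - r₁ t) + (r₄ t - r₃ t) - (1 / 2 : ℝ) • (r₄ t - r₂ t))) t := by
  obtain ⟨⟨-, h₁⟩, ⟨-, h₂⟩, ⟨-, h₃⟩, ⟨-, h₄⟩, e₁, e₂, e₃, e₄⟩ := h
  exact ⟨e₁ t ▸ (h₁ t).hasDerivAt, e₂ t ▸ (h₂ t).hasDerivAt, e₃ t ▸ (h₃ t).hasDerivAt,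
    e₄ t ▸ (h₄ t).hasDerivAt⟩

theorem solvesLinearODE_add_add_add (h : IsFourBodySolution ω r₁ r₂ r₃ r₄) :
    SolvesLinearODE 0 (fun t => r₁ t + r₂ t + r₃ t + r₄ t)
      (fun t => deriv r₁ t + deriv r₂ t + deriv r₃ t + deriv r₄ t) := fun t => by
  obtain ⟨h₁, h₂, h₃, h₄⟩ := h.hasDerivAt t
  obtain ⟨h₁', h₂', h₃', h₄'⟩ := h.hasDerivAt_deriv t
  exact ⟨((h₁.add h₂).add h₃).add h₄, (((h₁'.add h₂').add h₃').add h₄').congr_deriv (by module)⟩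

theorem solvesLinearODE_sub_add_sub (h : IsFourBodySolution ω r₁ r₂ r₃ r₄) :
    SolvesLinearODE (-((2 * ω) ^ 2)) (fun t => r₁ t - r₂ t + (r₃ t - r₄ t))
      (fun t => deriv r₁ t - deriv r₂ t + (deriv r₃ t - deriv r₄ t)) := fun t => by
  obtain ⟨h₁, h₂, h₃, h₄⟩ := h.hasDerivAt t
  obtain ⟨h₁', h₂', h₃', h₄'⟩ := h.hasDerivAt_deriv t
  exact ⟨(h₁.sub h₂).add (h₃.sub h₄), ((h₁'.sub h₂').add (h₃'.sub h₄')).congr_deriv (by module)⟩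

theorem solvesLinearODE_sub₁₃ (h : IsFourBodySolution ω r₁ r₂ r₃ r₄) :
    SolvesLinearODE (-(ω ^ 2)) (fun t => r₁ t - r₃ t) (fun t => deriv r₁ t - deriv r₃ t) :=
  fun t => by
  obtain ⟨h₁, -, h₃, -⟩ := h.hasDerivAt t
  obtain ⟨h₁', -, h₃', -⟩ := h.hasDerivAt_deriv t
  exact ⟨h₁.sub h₃, (h₁'.sub h₃').congr_deriv (by module)⟩

theorem solvesLinearODE_sub₂₄ (h : IsFourBodySolution ω r₁ r₂ r₃ r₄) :
    SolvesLinearODE (-(ω ^ 2)) (fun t => r₂ t - r₄ t) (fun t => deriv r₂ t - deriv r₄ t) :=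
  fun t => by
  obtain ⟨-, h₂, -, h₄⟩ := h.hasDerivAt t
  obtain ⟨-, h₂', -, h₄'⟩ := h.hasDerivAt_deriv t
  exact ⟨h₂.sub h₄, (h₂'.sub h₄').congr_deriv (by module)⟩

theorem add_shift_eq (h : IsFourBodySolution ω r₁ r₂ r₃ r₄) (hω : ω ≠ 0)
    (hP : deriv r₁ 0 + deriv r₂ 0 + deriv r₃ 0 + deriv r₄ 0 = 0) (t : ℝ) :
    r₁ (t + π / (2 * ω)) + r₃ (t + π / (2 * ω)) = r₂ t + r₄ t := by
  have hS := h.solvesLinearODE_add_add_add.eq_initial hP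
  have hD := h.solvesLinearODE_sub_add_sub.add_pi_div (mul_ne_zero two_ne_zero hω) t
  linear_combination (norm := module)
    (1 / 2 : ℝ) • (hS (t + π / (2 * ω)) - hS t + hD)

theorem sub_shift_eq (h : IsFourBodySolution ω r₁ r₂ r₃ r₄) (hω : ω ≠ 0)
    (h₀ : ω • (r₂ 0 - r₄ 0) = deriv r₁ 0 - deriv r₃ 0)
    (h₀' : deriv r₂ 0 - deriv r₄ 0 = -(ω • (r₁ 0 - r₃ 0))) (t : ℝ) :
    r₁ (t + π / (2 * ω)) - r₃ (t + π / (2 * ω)) = r₂ t - r₄ t :=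
  (h.solvesLinearODE_sub₁₃.eq_add_pi_div_two hω h.solvesLinearODE_sub₂₄ h₀ h₀' t).symm

end IsFourBodySolution

theorem choreography_sufficiency_general (m ω : ℝ) (hm : 0 < m) (hω : 0 < ω)
    (r₁ r₂ r₃ r₄ : ℝ → Plane)
    (hsol : IsFourBodySolution ω r₁ r₂ r₃ r₄)
    (hcomp : m • deriv r₁ 0 + m • deriv r₂ 0 + m • deriv r₃ 0 + m • deriv r₄ 0 = 0)
    (hcos : (m * ω) • (r₂ 0 - r₄ 0) = m • deriv r₁ 0 - m • deriv r₃ 0)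
    (hsin : m • deriv r₂ 0 - m • deriv r₄ 0 = (-(m * ω)) • (r₁ 0 - r₃ 0)) :
    ∀ t : ℝ, r₂ t = r₁ (t + Real.pi / (2 * ω)) := by
  have hP : deriv r₁ 0 + deriv r₂ 0 + deriv r₃ 0 + deriv r₄ 0 = 0 :=
    smul_right_injective Plane hm.ne' (by simpa only [smul_add, smul_zero] using hcomp)
  have h₀ : ω • (r₂ 0 - r₄ 0) = deriv r₁ 0 - deriv r₃ 0 :=
    smul_right_injective Plane hm.ne' (by simpa only [smul_sub, smul_smul] using hcos)
  have h₀' : deriv r₂ 0 - deriv r₄ 0 = -(ω • (r₁ 0 - r₃ 0)) :=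
    smul_right_injective Plane hm.ne' (by linear_combination (norm := module) hsin)
  intro t
  linear_combination (norm := module) (-1 / 2 : ℝ) •
    (hsol.add_shift_eq hω.ne' hP t + hsol.sub_shift_eq hω.ne' h₀ h₀' t)

/-- **Lemma 1, sufficiency.** If the initial data of a center-of-mass-frame
solution satisfy `mω r₂₄(0) = p₁₃(0)` and `p₂₄(0) = −mω r₁₃(0)`, then
`r₂(t) = r₁(t + τ)` with `τ = π/(2ω)`. -/
theorem choreography_sufficiency (m ω : ℝ) (hm : 0 < m) (hω : 0 < ω)
    (r₁ r₂ r₃ r₄ : ℝ → Plane)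
    (hsol : IsFourBodySolution ω r₁ r₂ r₃ r₄)
    (hcomr : r₁ 0 + r₂ 0 + r₃ 0 + r₄ 0 = 0)
    (hcomp : m • deriv r₁ 0 + m • deriv r₂ 0 + m • deriv r₃ 0 + m • deriv r₄ 0 = 0)
    (hcos : (m * ω) • (r₂ 0 - r₄ 0) = m • deriv r₁ 0 - m • deriv r₃ 0)
    (hsin : m • deriv r₂ 0 - m • deriv r₄ 0 = (-(m * ω)) • (r₁ 0 - r₃ 0)) :
    ∀ t : ℝ, r₂ t = r₁ (t + Real.pi / (2 * ω)) :=
  choreography_sufficiency_general m ω hm hω r₁ r₂ r₃ r₄ hsol hcomp hcos hsin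
end
end

section
/- (Lemma 1, necessity.) Let r₁, r₂, r₃, r₄ be a solution of the four-body system in the center-of-mass frame such that r₂(t) = r₁(t + τ) for all t ∈ ℝ, where τ = π/(2ω). Then the initial data satisfy mω r₂₄(0) = p₁₃(0) and p₂₄(0) = −mω r₁₃(0). -/
/-!
In the centre-of-mass frame Newton's equations become
`rᵢ'' = -ω² (5/2 rᵢ + 3/2 r_{i+2})`, so the relation `r₂ = r₁(· + τ)` forces `r₄ = r₃(· + τ)`.
Hence `r₂₄(0) = r₁₃(τ)` and `r₂₄'(0) = r₁₃'(τ)`. The difference `u = r₁₃` is a harmonic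
oscillator, `u'' = -ω² u`, and a quarter period `τ = π/(2ω)` rotates its phase-space data:
`ω u(τ) = u'(0)` and `u'(τ) = -ω u(0)`.
-/

noncomputable section

open Real

section HarmonicOscillator

variable {E : Type*} [NormedAddCommGroup E] [NormedSpace ℝ E]

lemma eq_zero_of_deriv_deriv_eq_zero {f : ℝ → E} (hf : Differentiable ℝ f)
    (hf' : Differentiable ℝ (deriv f)) (hf'' : ∀ t, deriv (deriv f) t = 0)
    (h₀ : f 0 = 0) (h₀' : deriv f 0 = 0) (t : ℝ) : f t = 0 := by
  have hv : ∀ t, deriv f t = 0 := fun t => (is_const_of_deriv_eq_zero hf' hf'' t 0).trans h₀'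
  exact (is_const_of_deriv_eq_zero hf hv t 0).trans h₀

variable {ω : ℝ} {u u' : ℝ → E}

lemma harmonic_phase_invariant (hu : ∀ t, HasDerivAt u (u' t) t)
    (hu' : ∀ t, HasDerivAt u' (-(ω ^ 2) • u t) t) (φ a b : ℝ) :
    ω • (cos (ω * a + φ) • u a) - sin (ω * a + φ) • u' a =
      ω • (cos (ω * b + φ) • u b) - sin (ω * b + φ) • u' b := by
  have hzero : ∀ t, HasDerivAt
      (fun t => ω • (cos (ω * t + φ) • u t) - sin (ω * t + φ) • u' t) 0 t := by
    intro t
    have hphase : HasDerivAt (fun t => ω * t + φ) ω t := by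
      simpa using ((hasDerivAt_id t).const_mul ω).add_const φ
    exact (((hphase.cos.smul (hu t)).const_smul ω).sub (hphase.sin.smul (hu' t))).congr_deriv
      (by module)
  exact is_const_of_deriv_eq_zero (fun t => (hzero t).differentiableAt)
    (fun t => (hzero t).deriv) a b

lemma harmonic_quarter_period (hω : ω ≠ 0) (hu : ∀ t, HasDerivAt u (u' t) t)
    (hu' : ∀ t, HasDerivAt u' (-(ω ^ 2) • u t) t) :
    ω • u (π / (2 * ω)) = u' 0 ∧ u' (π / (2 * ω)) = -(ω • u 0) := by
  have hquarter : ω * (π / (2 * ω)) = π / 2 := by field_simp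
  have hsin := harmonic_phase_invariant hu hu' (-(π / 2)) (π / (2 * ω)) 0
  have hcos := harmonic_phase_invariant hu hu' 0 (π / (2 * ω)) 0
  simp [hquarter] at hsin hcos
  exact ⟨hsin, neg_eq_iff_eq_neg.mp hcos⟩

end HarmonicOscillator

namespace IsFourBodySolution

variable {ω : ℝ} {r₁ r₂ r₃ r₄ : ℝ → Plane}

lemma sum_eq_zero (hsol : IsFourBodySolution ω r₁ r₂ r₃ r₄)
    (hr : r₁ 0 + r₂ 0 + r₃ 0 + r₄ 0 = 0)
    (hv : deriv r₁ 0 + deriv r₂ 0 + deriv r₃ 0 + deriv r₄ 0 = 0) (t : ℝ) :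
    r₁ t + r₂ t + r₃ t + r₄ t = 0 := by
  obtain ⟨⟨h₁, h₁'⟩, ⟨h₂, h₂'⟩, ⟨h₃, h₃'⟩, ⟨h₄, h₄'⟩, e₁, e₂, e₃, e₄⟩ := hsol
  have hderiv : deriv (r₁ + r₂ + r₃ + r₄) = deriv r₁ + deriv r₂ + deriv r₃ + deriv r₄ :=
    funext fun t => ((((h₁ t).hasDerivAt.add (h₂ t).hasDerivAt).add
      (h₃ t).hasDerivAt).add (h₄ t).hasDerivAt).deriv
  have hforce : ∀ t, deriv (deriv (r₁ + r₂ + r₃ + r₄)) t = 0 := fun t => by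
    rw [hderiv, ((((h₁' t).hasDerivAt.add (h₂' t).hasDerivAt).add
      (h₃' t).hasDerivAt).add (h₄' t).hasDerivAt).deriv, e₁, e₂, e₃, e₄]
    module
  exact eq_zero_of_deriv_deriv_eq_zero (((h₁.add h₂).add h₃).add h₄)
    (hderiv ▸ ((h₁'.add h₂').add h₃').add h₄') hforce hr (by rw [hderiv]; exact hv) t

lemma deriv_deriv_of_sum_eq_zero (hsol : IsFourBodySolution ω r₁ r₂ r₃ r₄)
    (hcom : ∀ t, r₁ t + r₂ t + r₃ t + r₄ t = 0) (t : ℝ) :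
    deriv (deriv r₁) t = -(ω ^ 2) • ((5 / 2 : ℝ) • r₁ t + (3 / 2 : ℝ) • r₃ t) ∧
      deriv (deriv r₂) t = -(ω ^ 2) • ((5 / 2 : ℝ) • r₂ t + (3 / 2 : ℝ) • r₄ t) := by
  obtain ⟨-, -, -, -, e₁, e₂, -, -⟩ := hsol
  have hr₂₄ : r₂ t + r₄ t = -(r₁ t + r₃ t) := by
    rw [eq_neg_iff_add_eq_zero, ← hcom t]; abel
  constructor
  · rw [e₁]; linear_combination (norm := module) (ω ^ 2) • hr₂₄
  · rw [e₂]; linear_combination (norm := module) (ω ^ 2) • hr₂₄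

lemma r₄_eq_shift_r₃ (hsol : IsFourBodySolution ω r₁ r₂ r₃ r₄) (hω : ω ≠ 0)
    (hcom : ∀ t, r₁ t + r₂ t + r₃ t + r₄ t = 0) {τ : ℝ} (hshift : ∀ t, r₂ t = r₁ (t + τ))
    (t : ℝ) : r₄ t = r₃ (t + τ) := by
  have hacc : deriv (deriv r₂) t = deriv (deriv r₁) (t + τ) := by
    simpa only [iteratedDeriv_succ, iteratedDeriv_zero, ← funext hshift] using
      congrFun (iteratedDeriv_comp_add_const 2 r₁ τ) t
  rw [(hsol.deriv_deriv_of_sum_eq_zero hcom t).2,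
    (hsol.deriv_deriv_of_sum_eq_zero hcom (t + τ)).1, hshift] at hacc
  have := smul_right_injective Plane (neg_ne_zero.mpr (pow_ne_zero 2 hω)) hacc
  linear_combination (norm := module) (2 / 3 : ℝ) • this

lemma quarter_period (hsol : IsFourBodySolution ω r₁ r₂ r₃ r₄) (hω : ω ≠ 0) :
    ω • (r₁ (π / (2 * ω)) - r₃ (π / (2 * ω))) = deriv r₁ 0 - deriv r₃ 0 ∧
      deriv r₁ (π / (2 * ω)) - deriv r₃ (π / (2 * ω)) = -(ω • (r₁ 0 - r₃ 0)) := by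
  obtain ⟨⟨h₁, h₁'⟩, -, ⟨h₃, h₃'⟩, -, e₁, -, e₃, -⟩ := hsol
  refine harmonic_quarter_period (u := r₁ - r₃) (u' := deriv r₁ - deriv r₃) hω
    (fun t => (h₁ t).hasDerivAt.sub (h₃ t).hasDerivAt) fun t => ?_
  refine ((h₁' t).hasDerivAt.sub (h₃' t).hasDerivAt).congr_deriv ?_
  rw [e₁, e₃, Pi.sub_apply]
  module

end IsFourBodySolution

/-- **Lemma 1, necessity.** If a center-of-mass-frame solution satisfies
`r₂(t) = r₁(t + τ)` for all `t`, with `τ = π/(2ω)`, then the initial data satisfy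
`mω r₂₄(0) = p₁₃(0)` and `p₂₄(0) = −mω r₁₃(0)`. -/
theorem choreography_necessity (m ω : ℝ) (hm : 0 < m) (hω : 0 < ω)
    (r₁ r₂ r₃ r₄ : ℝ → Plane)
    (hsol : IsFourBodySolution ω r₁ r₂ r₃ r₄)
    (hcomr : r₁ 0 + r₂ 0 + r₃ 0 + r₄ 0 = 0)
    (hcomp : m • deriv r₁ 0 + m • deriv r₂ 0 + m • deriv r₃ 0 + m • deriv r₄ 0 = 0)
    (hchor : ∀ t : ℝ, r₂ t = r₁ (t + Real.pi / (2 * ω))) :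
    (m * ω) • (r₂ 0 - r₄ 0) = m • deriv r₁ 0 - m • deriv r₃ 0
    ∧ m • deriv r₂ 0 - m • deriv r₄ 0 = (-(m * ω)) • (r₁ 0 - r₃ 0) := by
  set τ := π / (2 * ω)
  have hv : deriv r₁ 0 + deriv r₂ 0 + deriv r₃ 0 + deriv r₄ 0 = 0 := by
    simp only [← smul_add, smul_eq_zero, hm.ne', false_or] at hcomp
    exact hcomp
  have h₃₄ := hsol.r₄_eq_shift_r₃ hω.ne' (hsol.sum_eq_zero hcomr hv) hchor
  have hv₂ : deriv r₂ 0 = deriv r₁ τ := by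
    rw [funext hchor, deriv_comp_add_const, zero_add]
  have hv₄ : deriv r₄ 0 = deriv r₃ τ := by
    rw [funext h₃₄, deriv_comp_add_const, zero_add]
  obtain ⟨hpos, hvel⟩ := hsol.quarter_period hω.ne'
  rw [hchor 0, h₃₄ 0, hv₂, hv₄, zero_add, ← smul_sub, ← smul_sub, mul_smul, hpos, hvel]
  constructor <;> module
end
end

section
/- The trisectrix limaçon curves rₖ(t) = r(t + (k−1)τ), k = 1,2,3,4, where r(t) = (½(cos ωt + cos 2ωt), ½(sin ωt + sin 2ωt)) and τ = π/(2ω), form a solution of the four-body system, and moreover r₁(t) + r₂(t) + r₃(t) + r₄(t) = 0 for all t ∈ ℝ. In particular the four bodies execute a choreography along the common trisectrix limaçon curve traced by r. -/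
noncomputable section

/-- The trisectrix limaçon curve
`r(t) = (½(cos ωt + cos 2ωt), ½(sin ωt + sin 2ωt))`. -/
def limax (ω : ℝ) : ℝ → Plane := fun t =>
  (WithLp.equiv 2 (Fin 2 → ℝ)).symm
    ![(Real.cos (ω * t) + Real.cos (2 * ω * t)) / 2,
      (Real.sin (ω * t) + Real.sin (2 * ω * t)) / 2]

/-!
Identify the plane with `ℂ` through the basis `1, i`. Then `r(t) = (z + z²)/2` with
`z = e^{iωt}`, and the shift by `τ = π/(2ω)` multiplies `z` by `e^{iωτ} = i`, so the `k`-th body is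
`(iᵏ z + (-1)ᵏ z²)/2`. Everything in sight is a combination `a z + b z²`, and differentiation and
the forces act on the two modes separately: the `z`-mode, with neighbours differing by a factor `i`,
feels the force factor `3/2 - i + i - 1/2 = 1`, and the `z²`-mode, with neighbours differing by `-1`,
feels `3/2 + 1 + 1 + 1/2 = 4`, matching `z'' = -ω² z` and `(z²)'' = -4ω² z²`. The centre of mass
vanishes because `1 + i - 1 - i = 0` and `1 - 1 + 1 - 1 = 0`.
-/

open Complex
open scoped Real

def epicycle (ω : ℝ) (a b : ℂ) (t : ℝ) : Plane :=
  orthonormalBasisOneI.repr (a * cexp (↑(ω * t) * I) + b * cexp (↑(ω * t) * I) ^ 2)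

section Epicycle

variable {ω : ℝ} {a b a' b' : ℂ}

lemma epicycle_add (t : ℝ) :
    epicycle ω (a + a') (b + b') t = epicycle ω a b t + epicycle ω a' b' t := by
  simp only [epicycle, ← map_add]
  congr 1
  ring

lemma epicycle_sub (t : ℝ) :
    epicycle ω (a - a') (b - b') t = epicycle ω a b t - epicycle ω a' b' t := by
  simp only [epicycle, ← map_sub]
  congr 1
  ring

lemma epicycle_ofReal_mul (c t : ℝ) : epicycle ω (c * a) (c * b) t = c • epicycle ω a b t := by
  simp only [epicycle, ← map_smul, real_smul]
  congr 1
  ring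

lemma epicycle_apply_add (t s : ℝ) :
    epicycle ω a b (t + s) =
      epicycle ω (a * cexp (↑(ω * s) * I)) (b * cexp (↑(ω * s) * I) ^ 2) t := by
  simp only [epicycle, mul_add, ofReal_add, add_mul, exp_add]
  congr 1
  ring

lemma hasDerivAt_epicycle (t : ℝ) :
    HasDerivAt (epicycle ω a b) (epicycle ω (ω * I * a) (2 * ω * I * b) t) t := by
  have hexp : HasDerivAt (fun s : ℝ => cexp (↑(ω * s) * I)) (ω * I * cexp (↑(ω * t) * I)) t := by
    simpa [mul_comm, mul_left_comm] using
      ((((hasDerivAt_id t).const_mul ω).ofReal_comp).mul_const I).cexp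
  have h := (hexp.const_mul a).add ((hexp.pow 2).const_mul b)
  refine (orthonormalBasisOneI.repr.hasFDerivAt.comp_hasDerivAt t h).congr_deriv ?_
  exact congrArg orthonormalBasisOneI.repr (by push_cast; ring)

lemma differentiable_epicycle : Differentiable ℝ (epicycle ω a b) :=
  fun t => (hasDerivAt_epicycle t).differentiableAt

lemma deriv_epicycle : deriv (epicycle ω a b) = epicycle ω (ω * I * a) (2 * ω * I * b) :=
  funext fun t => (hasDerivAt_epicycle t).deriv

lemma epicycle_zero_zero (t : ℝ) : epicycle ω 0 0 t = 0 := by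
  simp [epicycle]

end Epicycle

lemma limax_eq_epicycle (ω : ℝ) : limax ω = epicycle ω 2⁻¹ 2⁻¹ := by
  ext t i
  have hsq : cexp (↑(ω * t) * I) ^ 2 = cexp (↑(2 * ω * t) * I) := by
    rw [← exp_nat_mul]; push_cast; ring_nf
  simp only [epicycle, ← mul_add, hsq]
  fin_cases i <;>
    simp [limax, exp_ofReal_mul_I_re, exp_ofReal_mul_I_im, -ofReal_mul, div_eq_inv_mul]

lemma exp_mul_quarterPeriod {ω : ℝ} (hω : ω ≠ 0) (k : ℕ) :
    cexp (↑(ω * (k * (π / (2 * ω)))) * I) = I ^ k := by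
  have harg : ω * (k * (π / (2 * ω))) = k * (π / 2) := by field_simp
  rw [harg]
  push_cast
  rw [mul_assoc, exp_nat_mul, exp_pi_div_two_mul_I]

theorem limax_is_choreographic_solution_general (ω : ℝ) (hω : 0 < ω) :
    IsFourBodySolution ω
      (fun t => limax ω t)
      (fun t => limax ω (t + Real.pi / (2 * ω)))
      (fun t => limax ω (t + 2 * (Real.pi / (2 * ω))))
      (fun t => limax ω (t + 3 * (Real.pi / (2 * ω))))
    ∧ ∀ t : ℝ,
      limax ω t + limax ω (t + Real.pi / (2 * ω))
        + limax ω (t + 2 * (Real.pi / (2 * ω)))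
        + limax ω (t + 3 * (Real.pi / (2 * ω))) = 0 := by
  have h₁ : cexp (↑(ω * (π / (2 * ω))) * I) = I := by
    simpa using exp_mul_quarterPeriod hω.ne' 1
  have h₂ : cexp (↑(ω * (2 * (π / (2 * ω)))) * I) = -1 := by
    simpa using exp_mul_quarterPeriod hω.ne' 2
  have h₃ : cexp (↑(ω * (3 * (π / (2 * ω)))) * I) = -I := by
    simpa [pow_succ] using exp_mul_quarterPeriod hω.ne' 3
  simp only [IsFourBodySolution, limax_eq_epicycle, epicycle_apply_add, h₁, h₂, h₃,
    deriv_epicycle, differentiable_epicycle, and_self, true_and, ← epicycle_sub,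
    ← epicycle_add, ← epicycle_ofReal_mul]
  refine ⟨⟨fun t => ?_, fun t => ?_, fun t => ?_, fun t => ?_⟩, fun t => ?sum⟩
  case sum =>
    rw [← epicycle_zero_zero (ω := ω) t]
    congr 1 <;> simp [I_sq]
  all_goals congr 1 <;> push_cast <;> ring_nf <;> simp [I_sq] <;> ring

/-- The time-shifted trisectrix limaçon curves `rₖ(t) = r(t + (k−1)τ)`,
`τ = π/(2ω)`, form a solution of the four-body system whose sum vanishes identically:
a four-body choreography along the trisectrix limaçon. -/
theorem limax_is_choreographic_solution (m ω : ℝ) (hm : 0 < m) (hω : 0 < ω) :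
    IsFourBodySolution ω
      (fun t => limax ω t)
      (fun t => limax ω (t + Real.pi / (2 * ω)))
      (fun t => limax ω (t + 2 * (Real.pi / (2 * ω))))
      (fun t => limax ω (t + 3 * (Real.pi / (2 * ω))))
    ∧ ∀ t : ℝ,
      limax ω t + limax ω (t + Real.pi / (2 * ω))
        + limax ω (t + 2 * (Real.pi / (2 * ω)))
        + limax ω (t + 3 * (Real.pi / (2 * ω))) = 0 :=
  limax_is_choreographic_solution_general ω hω
end
end

section
/- Along the trisectrix limaçon solution, both relative distances between alternate bodies are constant and equal to 1: ‖r₁(t) − r₃(t)‖ = 1 and ‖r₂(t) − r₄(t)‖ = 1 for all t ∈ ℝ. -/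
noncomputable section

/-! Shifting time by `π/ω` (two quarter periods) turns the angles `ωt, 2ωt` into `ωt + π, 2ωt + 2π`,
so the cosine and sine of `ωt` flip sign while those of `2ωt` are unchanged. Hence
`r(s) − r(s + π/ω) = (cos ωs, sin ωs)`, a unit vector; bodies 1, 3 and bodies 2, 4 are such pairs. -/

lemma norm_toLp_cos_sin (θ : ℝ) :
    ‖(WithLp.equiv 2 (Fin 2 → ℝ)).symm ![Real.cos θ, Real.sin θ]‖ = 1 := by
  simp [EuclideanSpace.norm_eq, Fin.sum_univ_two]

lemma limax_sub_limax_add_pi_div {ω : ℝ} (hω : ω ≠ 0) (s : ℝ) :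
    limax ω s - limax ω (s + Real.pi / ω) =
      (WithLp.equiv 2 (Fin 2 → ℝ)).symm ![Real.cos (ω * s), Real.sin (ω * s)] := by
  have h₁ : ω * (s + Real.pi / ω) = ω * s + Real.pi := by field_simp
  have h₂ : 2 * ω * (s + Real.pi / ω) = 2 * ω * s + 2 * Real.pi := by field_simp
  ext i
  fin_cases i <;>
    simp only [limax, WithLp.equiv_symm_apply, PiLp.sub_apply, h₁, h₂, Real.cos_add_pi,
      Real.sin_add_pi, Real.cos_add_two_pi, Real.sin_add_two_pi, Fin.zero_eta, Fin.mk_one,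
      Matrix.cons_val_zero, Matrix.cons_val_one, Matrix.cons_val_fin_one] <;> ring

lemma norm_limax_sub_limax_add_pi_div {ω : ℝ} (hω : ω ≠ 0) (s : ℝ) :
    ‖limax ω s - limax ω (s + Real.pi / ω)‖ = 1 := by
  rw [limax_sub_limax_add_pi_div hω, norm_toLp_cos_sin]

theorem limax_alternate_distances_one_general (ω : ℝ) (hω : 0 < ω) :
    ∀ t : ℝ,
      ‖limax ω t - limax ω (t + 2 * (Real.pi / (2 * ω)))‖ = 1
      ∧ ‖limax ω (t + Real.pi / (2 * ω)) - limax ω (t + 3 * (Real.pi / (2 * ω)))‖ = 1 := by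
  intro t
  have two_quarters : 2 * (Real.pi / (2 * ω)) = Real.pi / ω := by field_simp
  have three_quarters : t + 3 * (Real.pi / (2 * ω)) = t + Real.pi / (2 * ω) + Real.pi / ω := by
    field_simp; ring
  rw [two_quarters, three_quarters]
  exact ⟨norm_limax_sub_limax_add_pi_div hω.ne' t,
    norm_limax_sub_limax_add_pi_div hω.ne' (t + Real.pi / (2 * ω))⟩

/-- Along the trisectrix limaçon solution `rₖ(t) = r(t + (k−1)τ)`,
`τ = π/(2ω)`, the relative distances between alternate bodies are constant, equal to 1:
`‖r₁(t) − r₃(t)‖ = ‖r₂(t) − r₄(t)‖ = 1`. -/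
theorem limax_alternate_distances_one (m ω : ℝ) (hm : 0 < m) (hω : 0 < ω) :
    ∀ t : ℝ,
      ‖limax ω t - limax ω (t + 2 * (Real.pi / (2 * ω)))‖ = 1
      ∧ ‖limax ω (t + Real.pi / (2 * ω)) - limax ω (t + 3 * (Real.pi / (2 * ω)))‖ = 1 :=
  limax_alternate_distances_one_general ω hω
end
end

section
/- For every solution of the four-body system, the quantity I(t) = r₁₃(t) · r₂₄(t) + (1/(m²ω²)) p₁₃(t) · p₂₄(t) is a global integral of motion: I(t) = I(0) for all t ∈ ℝ. -/
noncomputable section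

/-!
Newton's equations decouple along the diagonals: `r₁₃'' = -ω² r₁₃` and `r₂₄'' = -ω² r₂₄`.
For any two solutions `u, v` of the same oscillator equation `x'' = -c x`, the bilinear
energy `c ⟪u, v⟫ + ⟪u', v'⟫` has derivative `c(⟪u', v⟫ + ⟪u, v'⟫) - c⟪u, v'⟫ - c⟪u', v⟫ = 0`.
With `c = ω²` and `p = m r'`, dividing by `ω²` gives the integral `I`.
-/

open scoped RealInnerProductSpace

section Oscillator

variable {E : Type*} [NormedAddCommGroup E] [InnerProductSpace ℝ E]

theorem hasDerivAt_oscillator_inner_energy {c : ℝ} {u u' v v' : ℝ → E}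
    {t : ℝ} (hu : HasDerivAt u (u' t) t) (hu' : HasDerivAt u' (-c • u t) t)
    (hv : HasDerivAt v (v' t) t) (hv' : HasDerivAt v' (-c • v t) t) :
    HasDerivAt (fun s => c * ⟪u s, v s⟫ + ⟪u' s, v' s⟫) 0 t := by
  refine (((hu.inner ℝ hv).const_mul c).add (hu'.inner ℝ hv')).congr_deriv ?_
  rw [real_inner_smul_left, real_inner_smul_right]
  ring

theorem oscillator_inner_energy_eq {c : ℝ} {u u' v v' : ℝ → E}
    (hu : ∀ t, HasDerivAt u (u' t) t) (hu' : ∀ t, HasDerivAt u' (-c • u t) t)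
    (hv : ∀ t, HasDerivAt v (v' t) t) (hv' : ∀ t, HasDerivAt v' (-c • v t) t) (t s : ℝ) :
    c * ⟪u t, v t⟫ + ⟪u' t, v' t⟫ = c * ⟪u s, v s⟫ + ⟪u' s, v' s⟫ :=
  is_const_of_deriv_eq_zero
    (fun x => (hasDerivAt_oscillator_inner_energy (hu x) (hu' x) (hv x) (hv' x)).differentiableAt)
    (fun x => (hasDerivAt_oscillator_inner_energy (hu x) (hu' x) (hv x) (hv' x)).deriv) t s

end Oscillator

namespace IsFourBodySolution

variable {ω : ℝ} {r₁ r₂ r₃ r₄ : ℝ → Plane}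

theorem deriv_deriv_sub₁₃ (h : IsFourBodySolution ω r₁ r₂ r₃ r₄) (t : ℝ) :
    deriv (deriv r₁) t - deriv (deriv r₃) t = -ω ^ 2 • (r₁ t - r₃ t) := by
  rw [h.2.2.2.2.1 t, h.2.2.2.2.2.2.1 t]
  module

theorem deriv_deriv_sub₂₄ (h : IsFourBodySolution ω r₁ r₂ r₃ r₄) (t : ℝ) :
    deriv (deriv r₂) t - deriv (deriv r₄) t = -ω ^ 2 • (r₂ t - r₄ t) := by
  rw [h.2.2.2.2.2.1 t, h.2.2.2.2.2.2.2 t]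
  module

theorem diag_energy_eq (h : IsFourBodySolution ω r₁ r₂ r₃ r₄) (t s : ℝ) :
    ω ^ 2 * ⟪r₁ t - r₃ t, r₂ t - r₄ t⟫ + ⟪deriv r₁ t - deriv r₃ t, deriv r₂ t - deriv r₄ t⟫
      = ω ^ 2 * ⟪r₁ s - r₃ s, r₂ s - r₄ s⟫
        + ⟪deriv r₁ s - deriv r₃ s, deriv r₂ s - deriv r₄ s⟫ := by
  have h₁₃ := h.deriv_deriv_sub₁₃
  have h₂₄ := h.deriv_deriv_sub₂₄
  obtain ⟨⟨h₁, h₁'⟩, ⟨h₂, h₂'⟩, ⟨h₃, h₃'⟩, ⟨h₄, h₄'⟩, -⟩ := h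
  refine oscillator_inner_energy_eq (u := fun x => r₁ x - r₃ x) (v := fun x => r₂ x - r₄ x)
    (fun x => (h₁ x).hasDerivAt.sub (h₃ x).hasDerivAt) (fun x => ?_)
    (fun x => (h₂ x).hasDerivAt.sub (h₄ x).hasDerivAt) (fun x => ?_) t s
  · rw [← h₁₃]
    exact (h₁' x).hasDerivAt.sub (h₃' x).hasDerivAt
  · rw [← h₂₄]
    exact (h₂' x).hasDerivAt.sub (h₄' x).hasDerivAt

end IsFourBodySolution

/-- The quantity
`I = r₁₃ · r₂₄ + (1/(m²ω²)) p₁₃ · p₂₄` is a global integral of motion. -/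
theorem global_integral_I (m ω : ℝ) (hm : 0 < m) (hω : 0 < ω)
    (r₁ r₂ r₃ r₄ : ℝ → Plane)
    (hsol : IsFourBodySolution ω r₁ r₂ r₃ r₄) :
    ∀ t : ℝ,
      (inner ℝ (r₁ t - r₃ t) (r₂ t - r₄ t) : ℝ)
        + (1 / (m ^ 2 * ω ^ 2))
          * (inner ℝ (m • deriv r₁ t - m • deriv r₃ t) (m • deriv r₂ t - m • deriv r₄ t) : ℝ)
      = (inner ℝ (r₁ 0 - r₃ 0) (r₂ 0 - r₄ 0) : ℝ)
        + (1 / (m ^ 2 * ω ^ 2))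
          * (inner ℝ (m • deriv r₁ 0 - m • deriv r₃ 0) (m • deriv r₂ 0 - m • deriv r₄ 0) : ℝ) := by
  intro t
  have hm0 : m ≠ 0 := hm.ne'
  have hω2 : ω ^ 2 ≠ 0 := pow_ne_zero 2 hω.ne'
  have hmomenta : ∀ s : ℝ, (1 / (m ^ 2 * ω ^ 2))
      * ⟪m • deriv r₁ s - m • deriv r₃ s, m • deriv r₂ s - m • deriv r₄ s⟫
      = ⟪deriv r₁ s - deriv r₃ s, deriv r₂ s - deriv r₄ s⟫ / ω ^ 2 := by
    intro s
    rw [← smul_sub, ← smul_sub, real_inner_smul_left, real_inner_smul_right]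
    field_simp
  rw [hmomenta t, hmomenta 0]
  have henergy := hsol.diag_energy_eq t 0
  field_simp
  linarith
end
end

section
/- For every solution of the four-body system, with U₃ = ½((r₂+r₄) − (r₁+r₃)) = (U₃ₓ, U₃_y) and P₃ = ½((p₂+p₄) − (p₁+p₃)) = (P₃ₓ, P₃_y), the normal-mode angular momentum L(t) = U₃ₓ(t)P₃_y(t) − U₃_y(t)P₃ₓ(t) is constant: L(t) = L(0) for all t ∈ ℝ. -/
/-!
The combination `U₃` of the four positions is a normal mode: summing Newton's equations with
signs `(-1, +1, -1, +1)` gives `U₃'' = -4ω² U₃`. The force on this mode is therefore central,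
so the planar angular momentum `U₃ × P₃ = m (U₃ × U₃')` has derivative
`m (U₃' × U₃' + U₃ × U₃'') = 0`.
-/

noncomputable section

/-- Normal-mode coordinate `U₃ = ½((r₂+r₄) − (r₁+r₃))`. -/
def U3 (r₁ r₂ r₃ r₄ : ℝ → Plane) (t : ℝ) : Plane :=
  (1 / 2 : ℝ) • ((r₂ t + r₄ t) - (r₁ t + r₃ t))

/-- Normal-mode momentum `P₃ = ½((p₂+p₄) − (p₁+p₃))`, where `pᵢ = m rᵢ'`. -/
def P3 (m : ℝ) (r₁ r₂ r₃ r₄ : ℝ → Plane) (t : ℝ) : Plane :=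
  (1 / 2 : ℝ) • ((m • deriv r₂ t + m • deriv r₄ t) - (m • deriv r₁ t + m • deriv r₃ t))

def Plane.cross (u v : Plane) : ℝ := u 0 * v 1 - u 1 * v 0

namespace Plane

theorem cross_self (u : Plane) : cross u u = 0 := by
  unfold cross; ring

theorem cross_smul_right (u v : Plane) (c : ℝ) : cross u (c • v) = c * cross u v := by
  simp only [cross, PiLp.smul_apply, smul_eq_mul]; ring

theorem hasDerivAt_apply {u : ℝ → Plane} {u' : Plane} {t : ℝ} (hu : HasDerivAt u u' t)
    (i : Fin 2) : HasDerivAt (fun s => u s i) (u' i) t :=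
  (EuclideanSpace.proj (𝕜 := ℝ) i).hasFDerivAt.comp_hasDerivAt t hu

theorem hasDerivAt_cross {u v : ℝ → Plane} {u' v' : Plane} {t : ℝ} (hu : HasDerivAt u u' t)
    (hv : HasDerivAt v v' t) :
    HasDerivAt (fun s => cross (u s) (v s)) (cross u' (v t) + cross (u t) v') t := by
  have h : HasDerivAt (fun s => cross (u s) (v s)) _ t :=
    ((hasDerivAt_apply hu 0).mul (hasDerivAt_apply hv 1)).sub
      ((hasDerivAt_apply hu 1).mul (hasDerivAt_apply hv 0))
  exact h.congr_deriv (by unfold cross; ring)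

theorem cross_deriv_eq_of_central {w : ℝ → Plane} {c : ℝ → ℝ} (hw : Differentiable ℝ w)
    (hw' : Differentiable ℝ (deriv w)) (hcentral : ∀ t, deriv (deriv w) t = c t • w t)
    (s t : ℝ) : cross (w s) (deriv w s) = cross (w t) (deriv w t) := by
  have hzero : ∀ t, HasDerivAt (fun s => cross (w s) (deriv w s)) 0 t := fun t => by
    convert hasDerivAt_cross (hw t).hasDerivAt (hw' t).hasDerivAt using 1
    rw [hcentral, cross_self, cross_smul_right, cross_self]; ring
  exact is_const_of_deriv_eq_zero (fun t => (hzero t).differentiableAt)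
    (fun t => (hzero t).deriv) s t

end Plane

theorem hasDerivAt_U3 {r₁ r₂ r₃ r₄ : ℝ → Plane} {t : ℝ} (h₁ : DifferentiableAt ℝ r₁ t)
    (h₂ : DifferentiableAt ℝ r₂ t) (h₃ : DifferentiableAt ℝ r₃ t)
    (h₄ : DifferentiableAt ℝ r₄ t) :
    HasDerivAt (U3 r₁ r₂ r₃ r₄) (U3 (deriv r₁) (deriv r₂) (deriv r₃) (deriv r₄) t) t :=
  (((h₂.hasDerivAt.add h₄.hasDerivAt).sub (h₁.hasDerivAt.add h₃.hasDerivAt)).const_smul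
    (1 / 2 : ℝ) :)

theorem deriv_U3 {r₁ r₂ r₃ r₄ : ℝ → Plane} (h₁ : Differentiable ℝ r₁)
    (h₂ : Differentiable ℝ r₂) (h₃ : Differentiable ℝ r₃) (h₄ : Differentiable ℝ r₄) :
    deriv (U3 r₁ r₂ r₃ r₄) = U3 (deriv r₁) (deriv r₂) (deriv r₃) (deriv r₄) :=
  funext fun t => (hasDerivAt_U3 (h₁ t) (h₂ t) (h₃ t) (h₄ t)).deriv

theorem P3_eq_smul_U3 (m : ℝ) (r₁ r₂ r₃ r₄ : ℝ → Plane) (t : ℝ) :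
    P3 m r₁ r₂ r₃ r₄ t = m • U3 (deriv r₁) (deriv r₂) (deriv r₃) (deriv r₄) t := by
  unfold P3 U3; module

namespace IsFourBodySolution

variable {ω : ℝ} {r₁ r₂ r₃ r₄ : ℝ → Plane}

theorem differentiable_U3 (hsol : IsFourBodySolution ω r₁ r₂ r₃ r₄) :
    Differentiable ℝ (U3 r₁ r₂ r₃ r₄) := fun t =>
  (hasDerivAt_U3 (hsol.1.1 t) (hsol.2.1.1 t) (hsol.2.2.1.1 t) (hsol.2.2.2.1.1 t)).differentiableAt

theorem deriv_U3 (hsol : IsFourBodySolution ω r₁ r₂ r₃ r₄) :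
    deriv (U3 r₁ r₂ r₃ r₄) = U3 (deriv r₁) (deriv r₂) (deriv r₃) (deriv r₄) :=
  _root_.deriv_U3 hsol.1.1 hsol.2.1.1 hsol.2.2.1.1 hsol.2.2.2.1.1

theorem differentiable_deriv_U3 (hsol : IsFourBodySolution ω r₁ r₂ r₃ r₄) :
    Differentiable ℝ (deriv (U3 r₁ r₂ r₃ r₄)) := by
  rw [hsol.deriv_U3]
  obtain ⟨⟨-, h₁⟩, ⟨-, h₂⟩, ⟨-, h₃⟩, ⟨-, h₄⟩, -⟩ := hsol
  exact fun t => (hasDerivAt_U3 (h₁ t) (h₂ t) (h₃ t) (h₄ t)).differentiableAt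

theorem deriv_deriv_U3 (hsol : IsFourBodySolution ω r₁ r₂ r₃ r₄) (t : ℝ) :
    deriv (deriv (U3 r₁ r₂ r₃ r₄)) t = (-(4 * ω ^ 2)) • U3 r₁ r₂ r₃ r₄ t := by
  rw [hsol.deriv_U3]
  obtain ⟨⟨-, h₁⟩, ⟨-, h₂⟩, ⟨-, h₃⟩, ⟨-, h₄⟩, e₁, e₂, e₃, e₄⟩ := hsol
  rw [_root_.deriv_U3 h₁ h₂ h₃ h₄]
  unfold U3
  rw [e₁, e₂, e₃, e₄]
  module

end IsFourBodySolution

theorem normal_mode_angular_momentum_conserved_general (m ω : ℝ)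
    (r₁ r₂ r₃ r₄ : ℝ → Plane)
    (hsol : IsFourBodySolution ω r₁ r₂ r₃ r₄) :
    ∀ t : ℝ,
      U3 r₁ r₂ r₃ r₄ t 0 * P3 m r₁ r₂ r₃ r₄ t 1
        - U3 r₁ r₂ r₃ r₄ t 1 * P3 m r₁ r₂ r₃ r₄ t 0
      = U3 r₁ r₂ r₃ r₄ 0 0 * P3 m r₁ r₂ r₃ r₄ 0 1
        - U3 r₁ r₂ r₃ r₄ 0 1 * P3 m r₁ r₂ r₃ r₄ 0 0 := by
  intro t
  have hL : ∀ s, U3 r₁ r₂ r₃ r₄ s 0 * P3 m r₁ r₂ r₃ r₄ s 1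
      - U3 r₁ r₂ r₃ r₄ s 1 * P3 m r₁ r₂ r₃ r₄ s 0
      = m * Plane.cross (U3 r₁ r₂ r₃ r₄ s) (deriv (U3 r₁ r₂ r₃ r₄) s) := fun s => by
    rw [hsol.deriv_U3, ← Plane.cross_smul_right, ← P3_eq_smul_U3]; rfl
  rw [hL, hL, Plane.cross_deriv_eq_of_central hsol.differentiable_U3
    hsol.differentiable_deriv_U3 (c := fun _ => -(4 * ω ^ 2)) hsol.deriv_deriv_U3 t 0]

/-- The normal-mode angular momentum
`L = U₃ₓ P₃_y − U₃_y P₃ₓ` is a constant of motion. -/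
theorem normal_mode_angular_momentum_conserved (m ω : ℝ) (hm : 0 < m) (hω : 0 < ω)
    (r₁ r₂ r₃ r₄ : ℝ → Plane)
    (hsol : IsFourBodySolution ω r₁ r₂ r₃ r₄) :
    ∀ t : ℝ,
      U3 r₁ r₂ r₃ r₄ t 0 * P3 m r₁ r₂ r₃ r₄ t 1
        - U3 r₁ r₂ r₃ r₄ t 1 * P3 m r₁ r₂ r₃ r₄ t 0
      = U3 r₁ r₂ r₃ r₄ 0 0 * P3 m r₁ r₂ r₃ r₄ 0 1
        - U3 r₁ r₂ r₃ r₄ 0 1 * P3 m r₁ r₂ r₃ r₄ 0 0 :=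
  normal_mode_angular_momentum_conserved_general m ω r₁ r₂ r₃ r₄ hsol
end
end

section
/- For every solution of the four-body system, with U₃ = ½((r₂+r₄) − (r₁+r₃)) = (U₃ₓ, U₃_y) and P₃ = ½((p₂+p₄) − (p₁+p₃)) = (P₃ₓ, P₃_y), the x-direction energy of the 2ω normal mode, H₃ₓ(t) = P₃ₓ(t)²/(2m) + 2mω²U₃ₓ(t)², is constant: H₃ₓ(t) = H₃ₓ(0) for all t ∈ ℝ. -/
noncomputable section

/-- The x-direction energy of the `2ω` normal mode,
`H₃ₓ = P₃ₓ²/(2m) + 2mω²U₃ₓ²`, is a constant of motion. -/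
theorem normal_mode_x_energy_conserved (m ω : ℝ) (hm : 0 < m) (hω : 0 < ω)
    (r₁ r₂ r₃ r₄ : ℝ → Plane)
    (hsol : IsFourBodySolution ω r₁ r₂ r₃ r₄) :
    ∀ t : ℝ,
      P3 m r₁ r₂ r₃ r₄ t 0 ^ 2 / (2 * m) + 2 * m * ω ^ 2 * U3 r₁ r₂ r₃ r₄ t 0 ^ 2
      = P3 m r₁ r₂ r₃ r₄ 0 0 ^ 2 / (2 * m) + 2 * m * ω ^ 2 * U3 r₁ r₂ r₃ r₄ 0 0 ^ 2 := by
  obtain ⟨⟨h1, h1'⟩, ⟨h2, h2'⟩, ⟨h3, h3'⟩, ⟨h4, h4'⟩, e1, e2, e3, e4⟩ := hsol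
  set L : Plane →L[ℝ] ℝ := EuclideanSpace.proj (0 : Fin 2) with hL
  set u : ℝ → ℝ := fun t => (1 / 2) * ((r₂ t 0 + r₄ t 0) - (r₁ t 0 + r₃ t 0)) with hu
  set v : ℝ → ℝ := fun t =>
    (1 / 2) * ((deriv r₂ t 0 + deriv r₄ t 0) - (deriv r₁ t 0 + deriv r₃ t 0)) with hv
  have hLapp : ∀ x : Plane, L x = x 0 := fun x => rfl
  -- first derivatives of coordinate functions
  have d1 : ∀ t, HasDerivAt (fun s => r₁ s 0) (deriv r₁ t 0) t := fun t =>
    (L.hasFDerivAt.comp_hasDerivAt t ((h1 t).hasDerivAt))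
  have d2 : ∀ t, HasDerivAt (fun s => r₂ s 0) (deriv r₂ t 0) t := fun t =>
    (L.hasFDerivAt.comp_hasDerivAt t ((h2 t).hasDerivAt))
  have d3 : ∀ t, HasDerivAt (fun s => r₃ s 0) (deriv r₃ t 0) t := fun t =>
    (L.hasFDerivAt.comp_hasDerivAt t ((h3 t).hasDerivAt))
  have d4 : ∀ t, HasDerivAt (fun s => r₄ s 0) (deriv r₄ t 0) t := fun t =>
    (L.hasFDerivAt.comp_hasDerivAt t ((h4 t).hasDerivAt))
  have dd1 : ∀ t, HasDerivAt (fun s => deriv r₁ s 0) (deriv (deriv r₁) t 0) t := fun t =>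
    (L.hasFDerivAt.comp_hasDerivAt t ((h1' t).hasDerivAt))
  have dd2 : ∀ t, HasDerivAt (fun s => deriv r₂ s 0) (deriv (deriv r₂) t 0) t := fun t =>
    (L.hasFDerivAt.comp_hasDerivAt t ((h2' t).hasDerivAt))
  have dd3 : ∀ t, HasDerivAt (fun s => deriv r₃ s 0) (deriv (deriv r₃) t 0) t := fun t =>
    (L.hasFDerivAt.comp_hasDerivAt t ((h3' t).hasDerivAt))
  have dd4 : ∀ t, HasDerivAt (fun s => deriv r₄ s 0) (deriv (deriv r₄) t 0) t := fun t =>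
    (L.hasFDerivAt.comp_hasDerivAt t ((h4' t).hasDerivAt))
  have hud : ∀ t, HasDerivAt u (v t) t := by
    intro t
    have := ((((d2 t).add (d4 t)).sub ((d1 t).add (d3 t))).const_mul (1 / 2 : ℝ))
    simpa [hu, hv] using this
  have hvd : ∀ t, HasDerivAt v (-(4 * ω ^ 2) * u t) t := by
    intro t
    have h := ((((dd2 t).add (dd4 t)).sub ((dd1 t).add (dd3 t))).const_mul (1 / 2 : ℝ))
    have key : (1 / 2 : ℝ) * ((deriv (deriv r₂) t 0 + deriv (deriv r₄) t 0) -
        (deriv (deriv r₁) t 0 + deriv (deriv r₃) t 0)) = -(4 * ω ^ 2) * u t := by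
      rw [e1 t, e2 t, e3 t, e4 t]
      simp only [hu, PiLp.smul_apply, PiLp.add_apply, PiLp.sub_apply, smul_eq_mul]
      ring
    rw [key] at h
    simpa [hv] using h
  set E : ℝ → ℝ := fun t => (m * v t) ^ 2 / (2 * m) + 2 * m * ω ^ 2 * u t ^ 2 with hE
  have hEd : ∀ t, HasDerivAt E 0 t := by
    intro t
    have h1 : HasDerivAt (fun s => (m * v s) ^ 2 / (2 * m))
        (2 * (m * v t) * (m * (-(4 * ω ^ 2) * u t)) / (2 * m)) t := by
      have := (((hvd t).const_mul m).pow 2).div_const (2 * m)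
      simpa [mul_comm, mul_assoc, mul_left_comm] using this
    have h2 : HasDerivAt (fun s => 2 * m * ω ^ 2 * u s ^ 2)
        (2 * m * ω ^ 2 * (2 * u t * v t)) t := by
      have := (((hud t).pow 2).const_mul (2 * m * ω ^ 2))
      simpa [mul_comm, mul_assoc, mul_left_comm] using this
    have h := h1.add h2
    have : 2 * (m * v t) * (m * (-(4 * ω ^ 2) * u t)) / (2 * m)
        + 2 * m * ω ^ 2 * (2 * u t * v t) = 0 := by
      field_simp
      ring
    rwa [this] at h
  have hconst : ∀ t : ℝ, E t = E 0 := by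
    intro t
    exact is_const_of_deriv_eq_zero (fun s => (hEd s).differentiableAt)
      (fun s => (hEd s).deriv) t 0
  intro t
  have hP : ∀ s, P3 m r₁ r₂ r₃ r₄ s 0 = m * v s := by
    intro s
    simp only [P3, hv, PiLp.smul_apply, PiLp.add_apply, PiLp.sub_apply, smul_eq_mul]
    ring
  have hU : ∀ s, U3 r₁ r₂ r₃ r₄ s 0 = u s := by
    intro s
    simp only [U3, hu, PiLp.smul_apply, PiLp.add_apply, PiLp.sub_apply, smul_eq_mul]
  rw [hP, hP, hU, hU]
  exact hconst t
end
end

section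
/- (Particular involution.) Along the trisectrix limaçon solution, with U₃ = ½((r₂+r₄) − (r₁+r₃)) = (U₃ₓ, U₃_y) and P₃ = ½((p₂+p₄) − (p₁+p₃)) = (P₃ₓ, P₃_y), the Poisson bracket of the normal-mode angular momentum L = U₃ₓP₃_y − U₃_yP₃ₓ with the x-direction energy H₃ₓ = P₃ₓ²/(2m) + 2mω²U₃ₓ², namely the function (1/m)P₃ₓ(t)P₃_y(t) + 4mω²U₃ₓ(t)U₃_y(t), vanishes identically: (1/m)P₃ₓ(t)P₃_y(t) + 4mω²U₃ₓ(t)U₃_y(t) = 0 for all t ∈ ℝ. -/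
/-!
With `τ = π/(2ω)`, the bodies run along the limaçon a quarter period apart. Adding `r(t)` and
`r(t + 2τ)` cancels the first harmonic `e^{iωt}` and doubles the second, so
`U₃(t) = -(cos 2ωt, sin 2ωt)` is a uniform circular motion and `P₃ = m U₃'`. For that motion
`P₃ₓP₃_y/m = -4mω² sin 2ωt cos 2ωt`, which cancels `4mω²U₃ₓU₃_y` exactly.
-/

noncomputable section

open Real

theorem P3_eq_smul_deriv_U3 (m : ℝ) {r₁ r₂ r₃ r₄ : ℝ → Plane} {t : ℝ}
    (h₁ : DifferentiableAt ℝ r₁ t) (h₂ : DifferentiableAt ℝ r₂ t)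
    (h₃ : DifferentiableAt ℝ r₃ t) (h₄ : DifferentiableAt ℝ r₄ t) :
    P3 m r₁ r₂ r₃ r₄ t = m • deriv (U3 r₁ r₂ r₃ r₄) t := by
  have h : HasDerivAt (U3 r₁ r₂ r₃ r₄)
      ((1 / 2 : ℝ) • ((deriv r₂ t + deriv r₄ t) - (deriv r₁ t + deriv r₃ t))) t :=
    ((h₂.hasDerivAt.fun_add h₄.hasDerivAt).fun_sub
      (h₁.hasDerivAt.fun_add h₃.hasDerivAt)).fun_const_smul _
  rw [h.deriv, P3]
  module

def unitVec (θ : ℝ) : Plane := !₂[cos θ, sin θ]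

@[simp] theorem unitVec_apply_zero (θ : ℝ) : unitVec θ 0 = cos θ := rfl

@[simp] theorem unitVec_apply_one (θ : ℝ) : unitVec θ 1 = sin θ := rfl

theorem unitVec_add_pi (θ : ℝ) : unitVec (θ + π) = -unitVec θ := by
  ext i; fin_cases i <;> simp [cos_add_pi, sin_add_pi]

theorem hasDerivAt_unitVec (θ : ℝ) : HasDerivAt unitVec (unitVec (θ + π / 2)) θ := by
  have h : HasDerivAt (fun θ => ![cos θ, sin θ]) ![-sin θ, cos θ] θ := by
    rw [hasDerivAt_pi]
    intro i
    fin_cases i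
    exacts [hasDerivAt_cos θ, hasDerivAt_sin θ]
  have h' : unitVec (θ + π / 2) = !₂[-sin θ, cos θ] := by
    simp [unitVec, cos_add_pi_div_two, sin_add_pi_div_two]
  rw [h']
  exact (PiLp.continuousLinearEquiv 2 ℝ (fun _ : Fin 2 => ℝ)).symm.hasFDerivAt.comp_hasDerivAt θ h

theorem limax_eq_unitVec (ω t : ℝ) :
    limax ω t = (1 / 2 : ℝ) • (unitVec (ω * t) + unitVec (2 * ω * t)) := by
  ext i; fin_cases i <;> simp [limax] <;> ring

theorem hasDerivAt_unitVec_mul (c t : ℝ) :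
    HasDerivAt (fun s => unitVec (c * s)) (c • unitVec (c * t + π / 2)) t := by
  have h := (hasDerivAt_unitVec (c * t)).scomp t ((hasDerivAt_id' t).const_mul c)
  rw [mul_one] at h
  exact h

theorem differentiable_limax (ω : ℝ) : Differentiable ℝ (limax ω) := by
  rw [show limax ω = _ from funext (limax_eq_unitVec ω)]
  intro t
  exact (((hasDerivAt_unitVec_mul ω t).fun_add
    (hasDerivAt_unitVec_mul (2 * ω) t)).fun_const_smul _).differentiableAt

theorem limax_add_limax_add_half_period {ω : ℝ} (hω : ω ≠ 0) (t : ℝ) :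
    limax ω t + limax ω (t + π / ω) = unitVec (2 * ω * t) := by
  have h₁ : ω * (t + π / ω) = ω * t + π := by field_simp
  have h₂ : 2 * ω * (t + π / ω) = 2 * ω * t + π + π := by field_simp; ring
  rw [limax_eq_unitVec, limax_eq_unitVec, h₁, h₂, unitVec_add_pi, unitVec_add_pi, unitVec_add_pi]
  module

theorem U3_limax {ω : ℝ} (hω : ω ≠ 0) :
    U3 (fun s => limax ω s) (fun s => limax ω (s + π / (2 * ω)))
      (fun s => limax ω (s + 2 * (π / (2 * ω)))) (fun s => limax ω (s + 3 * (π / (2 * ω)))) =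
      fun s => -unitVec (2 * ω * s) := by
  funext s
  have h₂ : 2 * (π / (2 * ω)) = π / ω := by field_simp
  have h₃ : s + 3 * (π / (2 * ω)) = s + π / (2 * ω) + π / ω := by field_simp; ring
  have h₄ : 2 * ω * (s + π / (2 * ω)) = 2 * ω * s + π := by field_simp
  simp only [U3]
  rw [h₂, h₃, limax_add_limax_add_half_period hω, limax_add_limax_add_half_period hω, h₄,
    unitVec_add_pi]
  module

theorem particular_involution_limax_general (m ω : ℝ) (hω : 0 < ω) :
    ∀ t : ℝ,
      (1 / m) * P3 m (fun s => limax ω s) (fun s => limax ω (s + Real.pi / (2 * ω)))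
          (fun s => limax ω (s + 2 * (Real.pi / (2 * ω))))
          (fun s => limax ω (s + 3 * (Real.pi / (2 * ω)))) t 0
        * P3 m (fun s => limax ω s) (fun s => limax ω (s + Real.pi / (2 * ω)))
          (fun s => limax ω (s + 2 * (Real.pi / (2 * ω))))
          (fun s => limax ω (s + 3 * (Real.pi / (2 * ω)))) t 1
      + 4 * m * ω ^ 2
        * U3 (fun s => limax ω s) (fun s => limax ω (s + Real.pi / (2 * ω)))
          (fun s => limax ω (s + 2 * (Real.pi / (2 * ω))))
          (fun s => limax ω (s + 3 * (Real.pi / (2 * ω)))) t 0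
        * U3 (fun s => limax ω s) (fun s => limax ω (s + Real.pi / (2 * ω)))
          (fun s => limax ω (s + 2 * (Real.pi / (2 * ω))))
          (fun s => limax ω (s + 3 * (Real.pi / (2 * ω)))) t 1 = 0 := by
  intro t
  have hshift (c : ℝ) : DifferentiableAt ℝ (fun s => limax ω (s + c)) t :=
    (differentiable_limax ω).differentiableAt.comp t (differentiableAt_id.add_const c)
  rw [P3_eq_smul_deriv_U3 m (differentiable_limax ω t) (hshift _) (hshift _) (hshift _),
    U3_limax hω.ne', (hasDerivAt_unitVec_mul (2 * ω) t).fun_neg.deriv]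
  simp only [PiLp.smul_apply, PiLp.neg_apply, unitVec_apply_zero, unitVec_apply_one,
    cos_add_pi_div_two, sin_add_pi_div_two, smul_eq_mul]
  linear_combination (-4 * ω ^ 2 * sin (2 * ω * t) * cos (2 * ω * t)) * mul_self_mul_inv m

/-- **particular involution.** Along the trisectrix limaçon solution
`rₖ(t) = r(t + (k−1)τ)`, `τ = π/(2ω)`, the Poisson bracket
`{L, H₃ₓ} = (1/m)P₃ₓP₃_y + 4mω²U₃ₓU₃_y` vanishes identically. -/
theorem particular_involution_limax (m ω : ℝ) (hm : 0 < m) (hω : 0 < ω) :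
    ∀ t : ℝ,
      (1 / m) * P3 m (fun s => limax ω s) (fun s => limax ω (s + Real.pi / (2 * ω)))
          (fun s => limax ω (s + 2 * (Real.pi / (2 * ω))))
          (fun s => limax ω (s + 3 * (Real.pi / (2 * ω)))) t 0
        * P3 m (fun s => limax ω s) (fun s => limax ω (s + Real.pi / (2 * ω)))
          (fun s => limax ω (s + 2 * (Real.pi / (2 * ω))))
          (fun s => limax ω (s + 3 * (Real.pi / (2 * ω)))) t 1
      + 4 * m * ω ^ 2
        * U3 (fun s => limax ω s) (fun s => limax ω (s + Real.pi / (2 * ω)))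
          (fun s => limax ω (s + 2 * (Real.pi / (2 * ω))))
          (fun s => limax ω (s + 3 * (Real.pi / (2 * ω)))) t 0
        * U3 (fun s => limax ω s) (fun s => limax ω (s + Real.pi / (2 * ω)))
          (fun s => limax ω (s + 2 * (Real.pi / (2 * ω))))
          (fun s => limax ω (s + 3 * (Real.pi / (2 * ω)))) t 1 = 0 :=
  particular_involution_limax_general m ω hω
end
end
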